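/- arXiv:2208.09963 — 12 statements merged into one kernel-verified Lean document; each statement's English description precedes it below -/
import Mathlib

section
/- Let 𝒪 be an integral domain whose fraction field K is not algebraically closed, and let p ∈ 𝒪[t] be a non-constant polynomial having no root in K. Then for every finite system f₁, …, f_r ∈ 𝒪[x₁, …, x_m] of polynomials there exists a single polynomial F ∈ 𝒪[x₁, …, x_m] such that for every (a₁, …, a_m) ∈ 𝒪^m one has F(a₁, …, a_m) = 0 if and only if fᵢ(a₁, …, a_m) = 0 for all i = 1, …, r. -/
/-- Let `𝒪` be an integral domain whose fraction field `K` is not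
algebraically closed, witnessed by a non-constant polynomial `p ∈ 𝒪[t]` having no root in `K`.
Then any finite system of polynomials over `𝒪` in `m` variables has the same common zero set
in `𝒪^m` as a single polynomial `F`. -/
theorem stmt_0 {O : Type*} [CommRing O] [IsDomain O]
    (K : Type*) [Field K] [Algebra O K] [IsFractionRing O K]
    (p : Polynomial O) (hp : 0 < p.natDegree)
    (hroot : ∀ x : K, Polynomial.aeval x p ≠ 0)
    {m r : ℕ} (f : Fin r → MvPolynomial (Fin m) O) :
    ∃ F : MvPolynomial (Fin m) O, ∀ a : Fin m → O,
      MvPolynomial.eval a F = 0 ↔ ∀ i, MvPolynomial.eval a (f i) = 0 := by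
  set d := p.natDegree with hd
  have hinj : Function.Injective (algebraMap O K) := IsFractionRing.injective O K
  have key : ∀ a b : O,
      (∑ i ∈ Finset.range (d+1), p.coeff i * a^i * b^(d - i)) = 0 ↔ (a = 0 ∧ b = 0) := by
    intro a b
    constructor
    · intro hS
      by_cases hb : b = 0
      · subst hb
        refine ⟨?_, rfl⟩
        have hsum : (∑ i ∈ Finset.range (d+1), p.coeff i * a^i * (0:O)^(d-i))
            = p.coeff d * a^d := by
          rw [Finset.sum_eq_single d]
          · simp
          · intro i hi hne
            have h1 : d - i ≠ 0 := by
              have := Finset.mem_range.1 hi; omega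
            simp [zero_pow h1]
          · simp
        rw [hsum] at hS
        have hpne : p ≠ 0 := by intro h; rw [hd, h] at hp; simp at hp
        have hc : p.coeff d ≠ 0 := by
          rw [hd]; exact Polynomial.leadingCoeff_ne_zero.mpr hpne
        have : a ^ d = 0 := by
          rcases mul_eq_zero.1 hS with h | h
          · exact absurd h hc
          · exact h
        exact pow_eq_zero_iff (by omega) |>.1 this
      · exfalso
        set φ := algebraMap O K
        have hb' : φ b ≠ 0 := fun h => hb (hinj (by simpa using h))
        set x : K := φ a / φ b with hx
        have hmain : Polynomial.aeval x p * (φ b)^d = φ (∑ i ∈ Finset.range (d+1),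
            p.coeff i * a^i * b^(d - i)) := by
          rw [Polynomial.aeval_eq_sum_range, Finset.sum_mul, map_sum]
          apply Finset.sum_congr rfl
          intro i hi
          have hid : i ≤ d := Nat.lt_succ_iff.1 (Finset.mem_range.1 hi)
          rw [map_mul, map_mul, map_pow, map_pow, Algebra.smul_def, hx, div_pow]
          rw [show (φ b)^d = (φ b)^i * (φ b)^(d-i) by rw [← pow_add]; congr 1; omega]
          field_simp
          ring
        rw [hS, map_zero] at hmain
        rcases mul_eq_zero.1 hmain with h | h
        · exact hroot x h
        · exact pow_ne_zero d hb' h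
    · rintro ⟨rfl, rfl⟩
      apply Finset.sum_eq_zero
      intro i hi
      have hid : i ≤ d := Nat.lt_succ_iff.1 (Finset.mem_range.1 hi)
      rw [mul_assoc, ← pow_add, show i + (d - i) = d by omega,
        zero_pow (show d ≠ 0 by omega), mul_zero]
  induction r with
  | zero => exact ⟨0, by simp⟩
  | succ n ih =>
    obtain ⟨F, hF⟩ := ih (fun i => f i.succ)
    refine ⟨∑ i ∈ Finset.range (d+1),
      MvPolynomial.C (p.coeff i) * (f 0)^i * F^(d-i), ?_⟩
    intro a
    have heval : MvPolynomial.eval a (∑ i ∈ Finset.range (d+1),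
        MvPolynomial.C (p.coeff i) * (f 0)^i * F^(d-i))
        = ∑ i ∈ Finset.range (d+1),
          p.coeff i * (MvPolynomial.eval a (f 0))^i * (MvPolynomial.eval a F)^(d-i) := by
      simp [map_sum]
    rw [heval, key, hF a, Fin.forall_fin_succ]
end

section
/- Let 𝐊 be a field that is an algebraic extension of ℚ, and let 𝒪_𝐊 be the integral closure of ℤ in 𝐊. Then for every x ∈ 𝒪_𝐊: x ≠ 0 if and only if there exist y, z, w ∈ 𝒪_𝐊 such that (2y − 1)(3z − 1) = x·w. -/
/-!
A nonzero algebraic integer `x` divides a nonzero rational integer, hence some `2 ^ e * m` with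
`m` odd. Since `2` is invertible modulo `m` and `3` modulo `2 ^ e`, there are integers with
`m ∣ 2y - 1` and `2 ^ e ∣ 3z - 1`, so `x` divides `(2y - 1)(3z - 1)`. Conversely, for `x = 0`
one of the factors would vanish, making `2` or `3` a unit in `𝒪_𝐊`; but an integral extension
of `ℤ` has no new units among the integers.
-/

theorem exists_two_mul_sub_one_mul_three_mul_sub_one_eq_mul_of_dvd {R : Type*} [CommRing R]
    {x m : R} (e : ℕ) (hm : Odd m) (hx : x ∣ 2 ^ e * m) :
    ∃ y z w : R, (2 * y - 1) * (3 * z - 1) = x * w := by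
  obtain ⟨k, rfl⟩ := hm
  have h32 : IsCoprime (3 : R) 2 := ⟨1, -1, by norm_num⟩
  obtain ⟨u, v, huv⟩ := h32.pow_right (n := e)
  obtain ⟨c, hc⟩ := hx
  refine ⟨-k, u, v * c, ?_⟩
  linear_combination (-(2 * k + 1)) * huv + v * hc

theorem exists_ne_zero_dvd_algebraMap {R S : Type*} [CommRing R] [Nontrivial R] [CommRing S]
    [IsDomain S] [Algebra R S] {x : S} (hx : x ≠ 0) (hint : IsIntegral R x) :
    ∃ r : R, r ≠ 0 ∧ x ∣ algebraMap R S r := by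
  have hspan := Ideal.comap_ne_bot_of_integral_mem hx (Ideal.mem_span_singleton_self x) hint
  obtain ⟨r, hr, hr0⟩ := Submodule.exists_mem_ne_zero_of_ne_bot hspan
  exact ⟨r, hr0, Ideal.mem_span_singleton.mp hr⟩

theorem exists_dvd_two_pow_mul_odd {S : Type*} [CommRing S] [IsDomain S]
    [Algebra.IsIntegral ℤ S] {x : S} (hx : x ≠ 0) :
    ∃ e m : ℕ, Odd m ∧ x ∣ 2 ^ e * m := by
  obtain ⟨N, hN, hxN⟩ :=
    exists_ne_zero_dvd_algebraMap hx (Algebra.IsIntegral.isIntegral (R := ℤ) x)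
  obtain ⟨e, m, hm, he⟩ := Nat.exists_eq_two_pow_mul_odd (Int.natAbs_ne_zero.mpr hN)
  refine ⟨e, m, hm, hxN.trans ?_⟩
  have hNabs : N ∣ ((2 ^ e * m : ℕ) : ℤ) := he ▸ Int.dvd_natAbs.mpr dvd_rfl
  simpa using map_dvd (algebraMap ℤ S) hNabs

theorem isUnit_intCast_iff_of_isIntegral {S : Type*} [CommRing S] [Algebra.IsIntegral ℤ S]
    [FaithfulSMul ℤ S] {n : ℤ} : IsUnit (n : S) ↔ IsUnit n :=
  ⟨fun h => IsUnit.of_map (algebraMap ℤ S) n (by simpa using h),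
    fun h => h.map (Int.castRingHom S)⟩

theorem two_mul_sub_one_mul_three_mul_sub_one_ne_zero {S : Type*} [CommRing S] [IsDomain S]
    [Algebra.IsIntegral ℤ S] [FaithfulSMul ℤ S] (y z : S) :
    (2 * y - 1) * (3 * z - 1) ≠ 0 := by
  rw [ne_eq, mul_eq_zero, sub_eq_zero, sub_eq_zero]
  rintro (h | h)
  · have h2 : IsUnit ((2 : ℤ) : S) := .of_mul_eq_one y (by exact_mod_cast h)
    exact absurd (isUnit_intCast_iff_of_isIntegral.mp h2) (by decide)
  · have h3 : IsUnit ((3 : ℤ) : S) := .of_mul_eq_one z (by exact_mod_cast h)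
    exact absurd (isUnit_intCast_iff_of_isIntegral.mp h3) (by decide)

theorem stmt_1_general (K : Type*) [Field K] [CharZero K]
    (x : integralClosure ℤ K) :
    x ≠ 0 ↔ ∃ y z w : integralClosure ℤ K, (2 * y - 1) * (3 * z - 1) = x * w := by
  constructor
  · intro hx
    obtain ⟨e, m, hm, hdvd⟩ := exists_dvd_two_pow_mul_odd hx
    exact exists_two_mul_sub_one_mul_three_mul_sub_one_eq_mul_of_dvd e hm.natCast hdvd
  · rintro ⟨y, z, w, h⟩ rfl
    exact two_mul_sub_one_mul_three_mul_sub_one_ne_zero y z (by rw [h, zero_mul])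

/-- Let `𝐊` be an algebraic extension of `ℚ` and `𝒪_𝐊` the integral closure
of `ℤ` in `𝐊`.  For `x ∈ 𝒪_𝐊`: `x ≠ 0` iff there exist `y, z, w ∈ 𝒪_𝐊` with
`(2y − 1)(3z − 1) = x·w`. -/
theorem stmt_1 (K : Type*) [Field K] [CharZero K] [Algebra.IsAlgebraic ℚ K]
    (x : integralClosure ℤ K) :
    x ≠ 0 ↔ ∃ y z w : integralClosure ℤ K, (2 * y - 1) * (3 * z - 1) = x * w :=
  stmt_1_general K x
end

section
/- Let K be a number field and let 𝐋 be an algebraic (possibly infinite-degree) field extension of K. Suppose there exists a subset S of 𝒪_𝐋 with (the image of) ℕ ⊆ S ⊆ 𝒪_K (i.e., S is contained in the image of 𝒪_K in 𝒪_𝐋 and contains the image of every natural number), and suppose S has a diophantine definition over 𝒪_𝐋. Then the image of 𝒪_K in 𝒪_𝐋 has a diophantine definition over 𝒪_𝐋. -/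
/-
𝒪_K is generated as an abelian group by finitely many w₁, …, w_d, so its image in 𝒪_𝐋 is the
set of sums ∑ wᵢ (sᵢ - tᵢ) with sᵢ, tᵢ ∈ S: every integer is a difference of two naturals, and S
lies in the image of the ring 𝒪_K. The image of a diophantine set under a polynomial map is
diophantine.
-/

/-- A subset `E` of a commutative ring `R` has a diophantine definition over `R` if there is a
finite system of polynomials `f₁, …, f_k ∈ R[t, x₁, …, x_n]` such that `τ ∈ E` iff the system
`fᵢ(τ, a₁, …, a_n) = 0` has a solution `a₁, …, a_n ∈ R`. -/
def IsDiophantineOver (R : Type*) [CommRing R] (E : Set R) : Prop :=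
  ∃ (n k : ℕ) (f : Fin k → MvPolynomial (Fin (n + 1)) R),
    ∀ τ : R, τ ∈ E ↔ ∃ a : Fin n → R, ∀ i, MvPolynomial.eval (Fin.cons τ a) (f i) = 0

open MvPolynomial (eval rename C X eval_rename eval_X)

lemma Option.elim'_comp_finSuccEquiv {α : Type*} {n : ℕ} (τ : α) (a : Fin n → α) :
    Option.elim' τ a ∘ finSuccEquiv n = Fin.cons τ a := by
  funext i
  cases i using Fin.cases <;> simp

namespace IsDiophantineOver

variable {R : Type*} [CommRing R]

theorem iff_exists_fintype {E : Set R} :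
    IsDiophantineOver R E ↔ ∃ (ι κ : Type) (_ : Fintype ι) (_ : Fintype κ)
      (f : κ → MvPolynomial (Option ι) R),
      ∀ τ : R, τ ∈ E ↔ ∃ a : ι → R, ∀ j, eval (Option.elim' τ a) (f j) = 0 := by
  constructor
  · rintro ⟨n, k, f, hf⟩
    refine ⟨Fin n, Fin k, inferInstance, inferInstance,
      fun j => rename (finSuccEquiv n) (f j), fun τ => ?_⟩
    simp only [hf, eval_rename, Option.elim'_comp_finSuccEquiv]
  · rintro ⟨ι, κ, _, _, f, hf⟩
    let eι := Fintype.equivFin ι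
    let eκ := Fintype.equivFin κ
    refine ⟨Fintype.card ι, Fintype.card κ,
      fun j => rename ((finSuccEquiv _).symm ∘ Option.map eι) (f (eκ.symm j)), fun τ => ?_⟩
    have key (a : Fin (Fintype.card ι) → R) :
        Fin.cons τ a ∘ (finSuccEquiv _).symm ∘ Option.map eι = Option.elim' τ (a ∘ eι) := by
      funext o
      cases o <;> simp
    simp only [hf, eval_rename, key]
    exact (eι.arrowCongr (Equiv.refl R)).exists_congr_left.trans
      (exists_congr fun a => eκ.symm.forall_congr_right.symm)

/-- The defining system of the image imposes that of `S` on each coordinate `c i`, with its own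
auxiliary variables `(i, l)`, together with the equation `τ = p(c)`. -/
theorem image_eval_pi {S : Set R} (hS : IsDiophantineOver R S) {μ : Type} [Fintype μ]
    (p : MvPolynomial μ R) :
    IsDiophantineOver R ((fun c => eval c p) '' Set.univ.pi fun _ => S) := by
  obtain ⟨ι, κ, _, _, f, hf⟩ := iff_exists_fintype.mp hS
  let coord (i : μ) : Option ι → Option (μ ⊕ μ × ι) :=
    Option.elim' (some (.inl i)) fun l => some (.inr (i, l))
  refine iff_exists_fintype.mpr ⟨μ ⊕ μ × ι, μ × κ ⊕ Unit, inferInstance, inferInstance,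
    Sum.elim (fun q => rename (coord q.1) (f q.2)) fun _ => X none - rename (some ∘ .inl) p,
    fun τ => ?_⟩
  have eval_coord (a : μ ⊕ μ × ι → R) (i : μ) (j : κ) :
      eval (Option.elim' τ a) (rename (coord i) (f j))
        = eval (Option.elim' (a (.inl i)) fun l => a (.inr (i, l))) (f j) := by
    rw [eval_rename]
    congr 2
    funext o
    cases o <;> rfl
  have eval_graph (a : μ ⊕ μ × ι → R) :
      eval (Option.elim' τ a) (X none - rename (some ∘ .inl) p) = τ - eval (a ∘ .inl) p := by
    rw [map_sub, eval_X, eval_rename]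
    rfl
  simp only [Set.mem_image, Set.mem_univ_pi, hf, Sum.forall, Prod.forall, Sum.elim_inl,
    Sum.elim_inr, eval_coord, eval_graph, sub_eq_zero]
  constructor
  · rintro ⟨c, hc, rfl⟩
    choose u hu using hc
    exact ⟨Sum.elim c fun q => u q.1 q.2, hu, fun _ => rfl⟩
  · rintro ⟨a, ha, hτ⟩
    exact ⟨a ∘ .inl, fun i => ⟨_, ha i⟩, (hτ ()).symm⟩

/-- For generators `w i` of `A` over `ℤ`, `φ(A)` consists of the sums `∑ φ(w i) (s i - t i)` with
`s i, t i ∈ S`: every integer is a difference of naturals, and `S ⊆ φ(A)`. -/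
theorem range_of_finite {A : Type*} [Ring A] [Module.Finite ℤ A] (φ : A →+* R) {S : Set R}
    (hS : IsDiophantineOver R S) (hNat : ∀ n : ℕ, (n : R) ∈ S) (hSφ : S ⊆ Set.range φ) :
    IsDiophantineOver R (Set.range φ) := by
  obtain ⟨d, w, hw⟩ := Module.Finite.exists_fin (R := ℤ) (M := A)
  let p : MvPolynomial (Fin d ⊕ Fin d) R := ∑ i, C (φ (w i)) * (X (.inl i) - X (.inr i))
  have eval_p (c : Fin d ⊕ Fin d → R) : eval c p = ∑ i, φ (w i) * (c (.inl i) - c (.inr i)) := by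
    simp [p]
  convert image_eval_pi hS p using 1
  ext x
  simp only [Set.mem_range, Set.mem_image, Set.mem_univ_pi, eval_p]
  constructor
  · rintro ⟨a, rfl⟩
    have ha : a ∈ Submodule.span ℤ (Set.range w) := hw ▸ Submodule.mem_top
    obtain ⟨n, rfl⟩ := (Submodule.mem_span_range_iff_exists_fun ℤ).mp ha
    have cast_toNat_sub (m : ℤ) : (m.toNat : R) - ((-m).toNat : R) = m := by
      exact_mod_cast congrArg (Int.cast : ℤ → R) m.toNat_sub_toNat_neg
    refine ⟨Sum.elim (fun i => ((n i).toNat : R)) fun i => ((-n i).toNat : R),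
      Sum.forall.mpr ⟨fun _ => hNat _, fun _ => hNat _⟩, ?_⟩
    simp only [Sum.elim_inl, Sum.elim_inr, cast_toNat_sub, map_sum, zsmul_eq_mul, map_mul,
      map_intCast, mul_comm]
  · rintro ⟨c, hc, rfl⟩
    choose u hu using fun j => hSφ (hc j)
    exact ⟨∑ i, w i * (u (.inl i) - u (.inr i)), by simp [hu]⟩

end IsDiophantineOver

open scoped NumberField

noncomputable def NumberField.RingOfIntegers.toIntegralClosure (K L : Type*) [Field K]
    [CommRing L] [Algebra K L] : 𝓞 K →+* integralClosure ℤ L :=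
  ((algebraMap K L).comp (algebraMap (𝓞 K) K)).codRestrict (integralClosure ℤ L) fun y =>
    (NumberField.RingOfIntegers.isIntegral_coe y).map (algebraMap K L).toIntAlgHom

theorem stmt_2_general (K : Type*) [Field K] [NumberField K]
    (L : Type*) [Field L] [Algebra K L]
    (S : Set (integralClosure ℤ L))
    (hNat : ∀ n : ℕ, (n : integralClosure ℤ L) ∈ S)
    (hSub : ∀ x ∈ S, ∃ y : NumberField.RingOfIntegers K,
      algebraMap K L (algebraMap (NumberField.RingOfIntegers K) K y) = (x : L))
    (hdio : IsDiophantineOver (integralClosure ℤ L) S) :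
    IsDiophantineOver (integralClosure ℤ L)
      {x : integralClosure ℤ L | ∃ y : NumberField.RingOfIntegers K,
        algebraMap K L (algebraMap (NumberField.RingOfIntegers K) K y) = (x : L)} := by
  have range_eq :
      {x : integralClosure ℤ L | ∃ y : 𝓞 K, algebraMap K L (algebraMap (𝓞 K) K y) = x}
        = Set.range (NumberField.RingOfIntegers.toIntegralClosure K L) := by
    ext x
    exact exists_congr fun y => ⟨fun h => Subtype.ext h, fun h => congrArg Subtype.val h⟩
  rw [range_eq]
  exact hdio.range_of_finite _ hNat fun x hx => range_eq ▸ hSub x hx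

/-- Let `K` be a number field and `𝐋` an algebraic (possibly infinite)
extension of `K`.  If a subset `S` of `𝒪_𝐋` with `ℕ ⊆ S ⊆ 𝒪_K` (images in `𝒪_𝐋`) has a
diophantine definition over `𝒪_𝐋`, then the image of `𝒪_K` in `𝒪_𝐋` has a diophantine
definition over `𝒪_𝐋`. -/
theorem stmt_2 (K : Type*) [Field K] [NumberField K]
    (L : Type*) [Field L] [CharZero L] [Algebra K L] [Algebra.IsAlgebraic K L]
    (S : Set (integralClosure ℤ L))
    (hNat : ∀ n : ℕ, (n : integralClosure ℤ L) ∈ S)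
    (hSub : ∀ x ∈ S, ∃ y : NumberField.RingOfIntegers K,
      algebraMap K L (algebraMap (NumberField.RingOfIntegers K) K y) = (x : L))
    (hdio : IsDiophantineOver (integralClosure ℤ L) S) :
    IsDiophantineOver (integralClosure ℤ L)
      {x : integralClosure ℤ L | ∃ y : NumberField.RingOfIntegers K,
        algebraMap K L (algebraMap (NumberField.RingOfIntegers K) K y) = (x : L)} :=
  stmt_2_general K L S hNat hSub hdio
end

section
/- Let K ⊆ L ⊆ M be number fields with M Galois over K (for instance, M the Galois closure of L over K). Let α ∈ 𝒪_L, b ∈ 𝒪_K, and let I be an ideal of 𝒪_K such that: (i) for every σ ∈ Gal(M/K), the absolute norm of the ideal I·𝒪_M is strictly greater than |N_{M/ℚ}(α − σ(α))|, where α is regarded as an element of M; and (ii) α − b ∈ I·𝒪_L. Then α lies in K (equivalently, α is in the image of 𝒪_K in 𝒪_L). -/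
open NumberField

/-- Let `K ⊆ L ⊆ M` be number fields with `M/K` Galois.  Let `α ∈ 𝒪_L`,
`b ∈ 𝒪_K`, and `I` an ideal of `𝒪_K` such that (i) for every `σ ∈ Gal(M/K)` the absolute norm
of `I·𝒪_M` exceeds `|N_{M/ℚ}(α − σα)|`, and (ii) `α ≡ b (mod I·𝒪_L)`.  Then `α` comes from
`𝒪_K`. -/
theorem stmt_5 (K L M : Type*) [Field K] [NumberField K] [Field L] [NumberField L]
    [Field M] [NumberField M] [Algebra K L] [Algebra L M] [Algebra K M]
    [IsScalarTower K L M] [IsGalois K M]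
    (α : 𝓞 L) (b : 𝓞 K) (I : Ideal (𝓞 K))
    (h1 : ∀ σ : M ≃ₐ[K] M,
      |Algebra.norm ℚ (algebraMap L M (algebraMap (𝓞 L) L α)
          - σ (algebraMap L M (algebraMap (𝓞 L) L α)))|
        < (Ideal.absNorm (I.map (algebraMap (𝓞 K) (𝓞 M))) : ℚ))
    (h2 : α - algebraMap (𝓞 K) (𝓞 L) b ∈ I.map (algebraMap (𝓞 K) (𝓞 L))) :
    ∃ y : 𝓞 K, algebraMap K L (algebraMap (𝓞 K) K y) = algebraMap (𝓞 L) L α := by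
  set β : 𝓞 M := algebraMap (𝓞 L) (𝓞 M) α with hβ
  set b' : 𝓞 M := algebraMap (𝓞 K) (𝓞 M) b with hb'
  set J : Ideal (𝓞 M) := I.map (algebraMap (𝓞 K) (𝓞 M)) with hJ
  have hcoe : (algebraMap (𝓞 M) M) β = algebraMap L M (algebraMap (𝓞 L) L α) := by
    rw [hβ, ← IsScalarTower.algebraMap_apply, IsScalarTower.algebraMap_apply (𝓞 L) L M]
  have hmem : β - b' ∈ J := by
    have h3 : algebraMap (𝓞 L) (𝓞 M) (α - algebraMap (𝓞 K) (𝓞 L) b) ∈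
        (I.map (algebraMap (𝓞 K) (𝓞 L))).map (algebraMap (𝓞 L) (𝓞 M)) :=
      Ideal.mem_map_of_mem _ h2
    rw [Ideal.map_map, map_sub, ← IsScalarTower.algebraMap_eq] at h3
    rwa [← IsScalarTower.algebraMap_apply (𝓞 K) (𝓞 L) (𝓞 M)] at h3
  have key : ∀ σ : M ≃ₐ[K] M, σ (algebraMap (𝓞 M) M β) = algebraMap (𝓞 M) M β := by
    intro σ
    set σ' := galRestrict (𝓞 K) K M (𝓞 M) σ with hσ'
    have hσb : σ' (β - b') ∈ J := by
      have hmap : J.map (σ' : 𝓞 M →+* 𝓞 M) = J := by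
        rw [hJ, Ideal.map_map]
        congr 1
        ext x
        simp
      rw [← hmap]
      exact Ideal.mem_map_of_mem _ hmem
    have hdiff : β - σ' β ∈ J := by
      have heq : β - σ' β = (β - b') - σ' (β - b') := by
        rw [map_sub, AlgEquiv.commutes σ' b]; ring
      rw [heq]
      exact Ideal.sub_mem J hmem hσb
    have hdvd : (Ideal.absNorm J : ℤ) ∣ Algebra.norm ℤ (β - σ' β) :=
      Ideal.absNorm_dvd_norm_of_mem hdiff
    have hnorm : (Algebra.norm ℤ (β - σ' β) : ℚ) =
        Algebra.norm ℚ (algebraMap (𝓞 M) M (β - σ' β)) := Algebra.coe_norm_int _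
    have hlt := h1 σ
    rw [← hcoe] at hlt
    have hσcoe : σ (algebraMap (𝓞 M) M β) = algebraMap (𝓞 M) M (σ' β) :=
      (algebraMap_galRestrict_apply (𝓞 K) σ β).symm
    rw [hσcoe, ← map_sub, ← hnorm] at hlt
    have hz : Algebra.norm ℤ (β - σ' β) = 0 := by
      by_contra hne
      have hle : (Ideal.absNorm J : ℤ) ≤ |Algebra.norm ℤ (β - σ' β)| :=
        Int.le_of_dvd (abs_pos.mpr hne) ((dvd_abs _ _).mpr hdvd)
      have : (Ideal.absNorm J : ℚ) ≤ |(Algebra.norm ℤ (β - σ' β) : ℚ)| := by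
        rw [← Int.cast_abs]
        exact_mod_cast hle
      linarith
    have hz' : β - σ' β = 0 := by
      rwa [Algebra.norm_eq_zero_iff] at hz
    have hfix : σ' β = β := by linear_combination -hz'
    rw [hσcoe, hfix]
  -- now algebraMap (𝓞 M) M β ∈ ⊥
  have hbot : algebraMap (𝓞 M) M β ∈ (⊥ : IntermediateField K M) := by
    rw [← IsGalois.fixedField_fixingSubgroup (⊥ : IntermediateField K M)]
    intro g
    exact key g.1
  rw [IntermediateField.mem_bot] at hbot
  obtain ⟨k, hk⟩ := hbot
  -- α = algebraMap K L k
  have hkl : algebraMap K L k = algebraMap (𝓞 L) L α := by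
    apply (algebraMap L M).injective
    rw [← hcoe, ← hk, ← IsScalarTower.algebraMap_apply]
  have hint : IsIntegral ℤ k := by
    rw [← isIntegral_algebraMap_iff (algebraMap K L).injective, hkl]
    exact RingOfIntegers.isIntegral_coe α
  exact ⟨⟨k, hint⟩, hkl⟩
end

section
/- Let M be a number field that is Galois over ℚ with m = [M : ℚ]. Let A be the (m+1)×(m+1) integer matrix whose row with index r (for r = 0, 1, …, m) is (r^m, r^{m−1}, …, r, 1). Let C be a positive integer with C ≥ (m+1)² and such that (m+1)²·|det(A')| < C for every m×m submatrix A' of A obtained by deleting one row and one column. Let α ∈ 𝒪_M with α ∉ {0, 1, …, m}, and set u = C·α·(1 − α)·(2 − α)···(m − α) (a nonzero element of 𝒪_M). Then for every σ ∈ Gal(M/ℚ) and every nonzero ideal I of 𝒪_M with I ⊆ u^{m²}·𝒪_M, one has |N_{M/ℚ}(α − σ(α))| < absNorm(I). -/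
/-!
The characteristic polynomial `χ = ∏_τ (X - τ α)` of `α` takes the value `N(k - α)` at each
node `k = 0, …, m`, and each `k - α` divides `w = α (1 - α) ⋯ (m - α)`, so these values are at
most `|N w|` in absolute value. Lagrange interpolation at the nodes then bounds the coefficients
of `χ` by `(m + 1)^(m + 1) |N w|`, and Cauchy's bound turns this into a bound on every conjugate
`τ α`, hence on `|N(α - σ α)|`. On the other side `absNorm I ≥ |N u|^(m²) = (C^m |N w|)^(m²)`,
and the growth of `C ≥ (m + 1)²` in the exponent `m³` wins as soon as `m ≥ 2`; for `m = 1` there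
is nothing to prove since `σ α = α`.
-/

open NumberField Polynomial Finset Module

theorem Polynomial.norm_coeff_prod_X_sub_C_le {R ι : Type*} [SeminormedCommRing R] [NormOneClass R]
    (s : Finset ι) (a : ι → R) (j : ℕ) :
    ‖(∏ i ∈ s, (X - C (a i))).coeff j‖ ≤ ∏ i ∈ s, (1 + ‖a i‖) := by
  classical
  induction s using Finset.induction_on generalizing j with
  | empty =>
    rw [prod_empty, prod_empty, coeff_one]
    split_ifs <;> simp
  | insert b s hb ih =>
    rw [prod_insert hb, prod_insert hb, sub_mul, coeff_sub, coeff_C_mul, add_mul, one_mul]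
    have hb' := norm_mul_le (a b) ((∏ i ∈ s, (X - C (a i))).coeff j)
    have hX : ‖(X * ∏ i ∈ s, (X - C (a i))).coeff j‖ ≤ ∏ i ∈ s, (1 + ‖a i‖) := by
      cases j with
      | zero => simpa using prod_nonneg fun i _ => by positivity
      | succ j => rw [coeff_X_mul]; exact ih j
    calc _ ≤ _ := norm_sub_le _ _
      _ ≤ _ := add_le_add hX (hb'.trans (mul_le_mul_of_nonneg_left (ih j) (norm_nonneg (a b))))

theorem Polynomial.norm_coeff_lagrangeBasis_natCast_le {𝕜 : Type*} [RCLike 𝕜] {m k : ℕ}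
    (hk : k ∈ range (m + 1)) (j : ℕ) :
    ‖(Lagrange.basis (range (m + 1)) (fun i : ℕ => (i : 𝕜)) k).coeff j‖ ≤ ((m : ℝ) + 1) ^ m := by
  have hdiv : ∀ i ∈ (range (m + 1)).erase k, ‖((k : 𝕜) - i)⁻¹‖ ≤ 1 := by
    intro i hi
    have hne : (k : ℤ) - i ≠ 0 := sub_ne_zero.mpr (by exact_mod_cast (mem_erase.mp hi).1.symm)
    rw [norm_inv, show (k : 𝕜) - i = (((k : ℤ) - i : ℤ) : 𝕜) by push_cast; rfl,
      ← RCLike.ofReal_intCast, RCLike.norm_ofReal, ← Int.cast_abs]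
    exact inv_le_one_of_one_le₀ (by exact_mod_cast Int.one_le_abs hne)
  have hnode : ∀ i ∈ (range (m + 1)).erase k, 1 + ‖(i : 𝕜)‖ ≤ (m : ℝ) + 1 := by
    intro i hi
    have : i ≤ m := Nat.lt_succ_iff.mp (mem_range.mp (mem_of_mem_erase hi))
    rw [RCLike.norm_natCast, add_comm]
    gcongr
  have hcard : ((range (m + 1)).erase k).card = m := by simp [card_erase_of_mem hk]
  simp only [Lagrange.basis, Lagrange.basisDivisor]
  rw [prod_mul_distrib, ← map_prod, coeff_C_mul]
  calc _ ≤ ‖∏ i ∈ (range (m + 1)).erase k, ((k : 𝕜) - i)⁻¹‖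
        * ‖(∏ i ∈ (range (m + 1)).erase k, (X - C (i : 𝕜))).coeff j‖ := norm_mul_le _ _
    _ ≤ 1 * ∏ i ∈ (range (m + 1)).erase k, (1 + ‖(i : 𝕜)‖) := by
        gcongr
        · rw [norm_prod]; exact prod_le_one (fun _ _ => norm_nonneg _) hdiv
        · exact norm_coeff_prod_X_sub_C_le _ _ j
    _ ≤ ((m : ℝ) + 1) ^ m := by
        rw [one_mul]
        calc _ ≤ ∏ _i ∈ (range (m + 1)).erase k, ((m : ℝ) + 1) :=
              prod_le_prod (fun _ _ => by positivity) hnode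
          _ = _ := by rw [prod_const, hcard]

theorem Polynomial.norm_coeff_le_of_norm_eval_natCast_le {𝕜 : Type*} [RCLike 𝕜] {p : 𝕜[X]}
    {m : ℕ} (hp : p.natDegree ≤ m) {B : ℝ} (hB : ∀ k ≤ m, ‖p.eval (k : 𝕜)‖ ≤ B) (j : ℕ) :
    ‖p.coeff j‖ ≤ ((m : ℝ) + 1) ^ (m + 1) * B := by
  have hinj : Set.InjOn (fun i : ℕ => (i : 𝕜)) (range (m + 1)) :=
    Nat.cast_injective.injOn
  have hdeg : p.degree < (range (m + 1)).card := by
    rw [card_range]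
    exact (degree_le_natDegree.trans (WithBot.coe_le_coe.mpr hp)).trans_lt
      (WithBot.coe_lt_coe.mpr m.lt_succ_self)
  rw [Lagrange.eq_interpolate hinj hdeg, Lagrange.interpolate_apply, finsetSum_coeff]
  have hterm : ∀ k ∈ range (m + 1), ‖(C (p.eval (k : 𝕜))
      * Lagrange.basis (range (m + 1)) (fun i : ℕ => (i : 𝕜)) k).coeff j‖
        ≤ B * ((m : ℝ) + 1) ^ m := by
    intro k hk
    rw [coeff_C_mul, norm_mul]
    exact mul_le_mul (hB k (Nat.lt_succ_iff.mp (mem_range.mp hk)))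
      (norm_coeff_lagrangeBasis_natCast_le hk j) (norm_nonneg _)
      ((norm_nonneg _).trans (hB 0 m.zero_le))
  calc _ ≤ _ := norm_sum_le _ _
    _ ≤ ∑ _k ∈ range (m + 1), B * ((m : ℝ) + 1) ^ m := sum_le_sum hterm
    _ = ((m : ℝ) + 1) ^ (m + 1) * B := by
        rw [sum_const, card_range, nsmul_eq_mul, pow_succ]; push_cast; ring

theorem Polynomial.Monic.norm_lt_of_isRoot {K : Type*} [NormedDivisionRing K] {p : K[X]}
    (hp : p.Monic) {E : ℝ} (hE : ∀ i, ‖p.coeff i‖ ≤ E) {z : K} (hz : p.IsRoot z) :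
    ‖z‖ < E + 1 := by
  have hsup : (range p.natDegree).sup (‖p.coeff ·‖₊) ≤ ⟨E, (norm_nonneg _).trans (hE 0)⟩ :=
    Finset.sup_le fun i _ => hE i
  have h := hz.norm_lt_cauchyBound hp.ne_zero
  rw [cauchyBound, hp.leadingCoeff, nnnorm_one, div_one] at h
  have h' := h.trans_le (add_le_add_left hsup 1)
  exact_mod_cast h'

theorem two_le_finrank_of_algEquiv_apply_ne {F K : Type*} [Field F] [Field K] [Algebra F K]
    [FiniteDimensional F K] {σ : K ≃ₐ[F] K} {x : K} (h : σ x ≠ x) : 2 ≤ finrank F K := by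
  by_contra! hlt
  have hbot : (⊥ : Subalgebra F K) = ⊤ :=
    Subalgebra.bot_eq_top_of_finrank_eq_one (by have := finrank_pos (R := F) (M := K); omega)
  obtain ⟨q, rfl⟩ := Algebra.mem_bot.mp (hbot ▸ Algebra.mem_top : x ∈ (⊥ : Subalgebra F K))
  exact h (σ.commutes q)

section NatCastSub

variable {S : Type*} [CommRing S] {α : S} {m : ℕ}

theorem natCast_sub_dvd_mul_prod_Icc {k : ℕ} (hk : k ≤ m) :
    (k : S) - α ∣ α * ∏ i ∈ Icc 1 m, ((i : S) - α) := by
  rcases k.eq_zero_or_pos with rfl | hk0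
  · simp
  · exact dvd_mul_of_dvd_right
      (dvd_prod_of_mem (fun i : ℕ => (i : S) - α) (mem_Icc.mpr ⟨hk0, hk⟩)) _

theorem mul_prod_Icc_natCast_sub_ne_zero [IsDomain S] (hα : ∀ k ≤ m, α ≠ k) :
    α * ∏ i ∈ Icc 1 m, ((i : S) - α) ≠ 0 :=
  have hsub : ∀ k ≤ m, (k : S) - α ≠ 0 := fun k hk => sub_ne_zero.mpr (hα k hk).symm
  mul_ne_zero (by simpa using hsub 0 m.zero_le)
    (prod_ne_zero_iff.mpr fun i hi => hsub i (mem_Icc.mp hi).2)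

end NatCastSub

theorem Algebra.natAbs_norm_le_of_dvd {S : Type*} [CommRing S] [IsDomain S] [Module.Free ℤ S]
    [Module.Finite ℤ S] {x y : S} (hy : y ≠ 0) (h : x ∣ y) :
    (Algebra.norm ℤ x).natAbs ≤ (Algebra.norm ℤ y).natAbs :=
  Nat.le_of_dvd (Int.natAbs_pos.mpr (Algebra.norm_ne_zero_iff.mpr hy))
    (Int.natAbs_dvd_natAbs.mpr (map_dvd _ h))

theorem Algebra.natAbs_norm_natCast_mul {S : Type*} [CommRing S] [Module.Free ℤ S]
    [Module.Finite ℤ S] (C : ℕ) (w : S) :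
    (Algebra.norm ℤ ((C : S) * w)).natAbs = C ^ finrank ℤ S * (Algebra.norm ℤ w).natAbs := by
  rw [map_mul, Algebra.norm_natCast, Int.natAbs_mul, Int.natAbs_pow, Int.natAbs_natCast]

theorem Ideal.natAbs_norm_le_absNorm_of_le_span_singleton {S : Type*} [CommRing S]
    [IsDedekindDomain S] [Module.Free ℤ S] [Module.Finite ℤ S] {I : Ideal S} (hI : I ≠ ⊥)
    {v : S} (h : I ≤ span {v}) : (Algebra.norm ℤ v).natAbs ≤ absNorm I := by
  rw [← absNorm_span_singleton]
  exact Nat.le_of_dvd (Nat.pos_of_ne_zero (mt absNorm_eq_zero_iff.mp hI))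
    (absNorm_dvd_absNorm_of_le h)

namespace NumberField

variable {K : Type*} [Field K] [NumberField K]

theorem RingOfIntegers.abs_norm_eq_natAbs (x : 𝓞 K) :
    |(Algebra.norm ℚ (x : K) : ℝ)| = (Algebra.norm ℤ x).natAbs := by
  rw [← Algebra.coe_norm_int, Nat.cast_natAbs, Int.cast_abs]
  rfl

theorem abs_norm_le_pow_finrank {x : K} {b : ℝ} (hb : ∀ τ : K →ₐ[ℚ] ℂ, ‖τ x‖ ≤ b) :
    |(Algebra.norm ℚ x : ℝ)| ≤ b ^ finrank ℚ K := by
  rw [← Complex.norm_ratCast, ← eq_ratCast (algebraMap ℚ ℂ), Algebra.norm_eq_prod_embeddings ℚ ℂ,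
    norm_prod, ← AlgHom.card ℚ K ℂ, ← card_univ, ← prod_const]
  exact prod_le_prod (fun _ _ => norm_nonneg _) fun τ _ => hb τ

theorem abs_norm_sub_algEquiv_le {x : K} {b : ℝ} (hb : ∀ τ : K →ₐ[ℚ] ℂ, ‖τ x‖ ≤ b)
    (σ : K ≃ₐ[ℚ] K) : |(Algebra.norm ℚ (x - σ x) : ℝ)| ≤ (2 * b) ^ finrank ℚ K :=
  abs_norm_le_pow_finrank fun τ => by
    rw [map_sub, two_mul]
    exact (norm_sub_le _ _).trans (add_le_add (hb τ) (hb (τ.comp σ.toAlgHom)))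

theorem norm_embedding_lt_of_abs_norm_natCast_sub_le {x : K} {B : ℝ}
    (hB : ∀ k ≤ finrank ℚ K, |(Algebra.norm ℚ ((k : K) - x) : ℝ)| ≤ B) (τ : K →ₐ[ℚ] ℂ) :
    ‖τ x‖ < ((finrank ℚ K : ℝ) + 1) ^ (finrank ℚ K + 1) * B + 1 := by
  set χ : ℂ[X] := ∏ τ : K →ₐ[ℚ] ℂ, (X - C (τ x))
  have hmonic : χ.Monic := monic_prod_of_monic _ _ fun τ _ => monic_X_sub_C _
  have hdeg : χ.natDegree = finrank ℚ K := by
    rw [natDegree_prod_of_monic _ _ fun τ _ => monic_X_sub_C _]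
    simp [AlgHom.card]
  have heval : ∀ k : ℕ, ‖χ.eval (k : ℂ)‖ = |(Algebra.norm ℚ ((k : K) - x) : ℝ)| := by
    intro k
    rw [← Complex.norm_ratCast, ← eq_ratCast (algebraMap ℚ ℂ), Algebra.norm_eq_prod_embeddings ℚ ℂ,
      eval_prod]
    simp
  refine hmonic.norm_lt_of_isRoot (norm_coeff_le_of_norm_eval_natCast_le hdeg.le fun k hk => ?_) ?_
  · rw [heval]; exact hB k hk
  · simp only [IsRoot, χ, eval_prod, eval_sub, eval_X, eval_C]
    exact prod_eq_zero (mem_univ τ) (sub_self _)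

end NumberField

theorem two_mul_add_one_pow_lt {m : ℕ} (hm : 2 ≤ m) {B C : ℝ} (hB : 1 ≤ B)
    (hC : ((m : ℝ) + 1) ^ 2 ≤ C) :
    (2 * (((m : ℝ) + 1) ^ (m + 1) * B + 1)) ^ m < (C ^ m * B) ^ m ^ 2 := by
  have hm' : (2 : ℝ) ≤ m := by exact_mod_cast hm
  have hE : 1 ≤ ((m : ℝ) + 1) ^ (m + 1) * B :=
    one_le_mul_of_one_le_of_one_le (one_le_pow₀ (by linarith)) hB
  have hbase : 2 * (((m : ℝ) + 1) ^ (m + 1) * B + 1) ≤ ((m : ℝ) + 1) ^ (m + 3) * B := by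
    have h4 : (4 : ℝ) ≤ ((m : ℝ) + 1) ^ 2 := by nlinarith
    rw [show ((m : ℝ) + 1) ^ (m + 3) * B = ((m : ℝ) + 1) ^ 2 * (((m : ℝ) + 1) ^ (m + 1) * B) by
      ring]
    nlinarith
  have hexp : (m + 3) * m < 2 * m ^ 3 := by
    have := Nat.mul_le_mul (Nat.mul_le_mul hm hm) hm
    nlinarith
  calc (2 * (((m : ℝ) + 1) ^ (m + 1) * B + 1)) ^ m
      ≤ (((m : ℝ) + 1) ^ (m + 3) * B) ^ m := pow_le_pow_left₀ (by positivity) hbase m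
    _ = ((m : ℝ) + 1) ^ ((m + 3) * m) * B ^ m := by rw [mul_pow, pow_mul]
    _ < ((m : ℝ) + 1) ^ (2 * m ^ 3) * B ^ m ^ 2 :=
        mul_lt_mul (pow_lt_pow_right₀ (by linarith) hexp)
          (pow_le_pow_right₀ hB (Nat.le_self_pow two_ne_zero m)) (by positivity) (by positivity)
    _ ≤ C ^ m ^ 3 * B ^ m ^ 2 := by
        rw [pow_mul]; gcongr
    _ = (C ^ m * B) ^ m ^ 2 := by ring

theorem stmt_6_general (M : Type*) [Field M] [NumberField M]
    (m : ℕ) (hm : m = Module.finrank ℚ M)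
    (C : ℕ) (hC1 : (m + 1) ^ 2 ≤ C)
    (α : 𝓞 M) (hα : ∀ k : ℕ, k ≤ m → α ≠ (k : 𝓞 M))
    (u : 𝓞 M) (hu : u = (C : 𝓞 M) * α * ∏ i ∈ Finset.Icc 1 m, ((i : 𝓞 M) - α))
    (σ : M ≃ₐ[ℚ] M) (I : Ideal (𝓞 M)) (hI : I ≠ ⊥)
    (hIu : I ≤ Ideal.span {u ^ m ^ 2}) :
    |Algebra.norm ℚ (algebraMap (𝓞 M) M α - σ (algebraMap (𝓞 M) M α))|
      < (Ideal.absNorm I : ℚ) := by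
  set x := algebraMap (𝓞 M) M α
  obtain hfix | hmove := eq_or_ne (σ x) x
  · rw [hfix, sub_self, Algebra.norm_zero, abs_zero]
    exact_mod_cast Nat.pos_of_ne_zero (mt Ideal.absNorm_eq_zero_iff.mp hI)
  have hm2 : 2 ≤ m := hm ▸ two_le_finrank_of_algEquiv_apply_ne hmove
  have hw := mul_prod_Icc_natCast_sub_ne_zero hα
  set B := (Algebra.norm ℤ (α * ∏ i ∈ Icc 1 m, ((i : 𝓞 M) - α))).natAbs
  have hB : ∀ k ≤ finrank ℚ M, |(Algebra.norm ℚ ((k : M) - x) : ℝ)| ≤ B := fun k hk => by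
    rw [show (k : M) - x = ((k - α : 𝓞 M) : M) by simp [x], RingOfIntegers.abs_norm_eq_natAbs]
    exact_mod_cast Algebra.natAbs_norm_le_of_dvd hw (natCast_sub_dvd_mul_prod_Icc (hm ▸ hk))
  have hIbound : (C ^ m * B) ^ m ^ 2 ≤ Ideal.absNorm I := by
    have := Ideal.natAbs_norm_le_absNorm_of_le_span_singleton hI hIu
    rwa [map_pow, Int.natAbs_pow, hu, mul_assoc, Algebra.natAbs_norm_natCast_mul,
      RingOfIntegers.rank, ← hm] at this
  have hσ := abs_norm_sub_algEquiv_le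
    (fun τ => (norm_embedding_lt_of_abs_norm_natCast_sub_le hB τ).le) σ
  rw [← hm] at hσ
  have hnum := two_mul_add_one_pow_lt hm2 (B := B) (C := C)
    (by exact_mod_cast Int.natAbs_pos.mpr (Algebra.norm_ne_zero_iff.mpr hw))
    (by exact_mod_cast hC1)
  have : |(Algebra.norm ℚ (x - σ x) : ℝ)| < (Ideal.absNorm I : ℝ) :=
    hσ.trans_lt (hnum.trans_le (by exact_mod_cast hIbound))
  exact_mod_cast this

/-- (Proposition on norm bounds.)  Let `M/ℚ` be Galois of degree `m`, `A` the
`(m+1)×(m+1)` matrix with row `r` equal to `(r^m, …, r, 1)`, and `C ≥ (m+1)²` a positive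
integer with `(m+1)²·|det A'| < C` for every `m×m` minor `A'` of `A`.  For `α ∈ 𝒪_M` with
`α ∉ {0, …, m}` and `u = C·α·(1−α)···(m−α)`, every nonzero ideal `I ⊆ u^{m²}·𝒪_M` satisfies
`|N_{M/ℚ}(α − σα)| < absNorm I` for all `σ ∈ Gal(M/ℚ)`. -/
theorem stmt_6 (M : Type*) [Field M] [NumberField M] [IsGalois ℚ M]
    (m : ℕ) (hm : m = Module.finrank ℚ M)
    (A : Matrix (Fin (m + 1)) (Fin (m + 1)) ℤ)
    (hA : ∀ r c : Fin (m + 1), A r c = (r : ℤ) ^ (m - (c : ℕ)))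
    (C : ℕ) (hC0 : 0 < C) (hC1 : (m + 1) ^ 2 ≤ C)
    (hC2 : ∀ i j : Fin (m + 1),
      ((m : ℤ) + 1) ^ 2 * |(A.submatrix i.succAbove j.succAbove).det| < (C : ℤ))
    (α : 𝓞 M) (hα : ∀ k : ℕ, k ≤ m → α ≠ (k : 𝓞 M))
    (u : 𝓞 M) (hu : u = (C : 𝓞 M) * α * ∏ i ∈ Finset.Icc 1 m, ((i : 𝓞 M) - α))
    (σ : M ≃ₐ[ℚ] M) (I : Ideal (𝓞 M)) (hI : I ≠ ⊥)
    (hIu : I ≤ Ideal.span {u ^ m ^ 2}) :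
    |Algebra.norm ℚ (algebraMap (𝓞 M) M α - σ (algebraMap (𝓞 M) M α))|
      < (Ideal.absNorm I : ℚ) :=
  stmt_6_general M m hm C hC1 α hα u hu σ I hI hIu
end

section
/- Let M be a totally real number field that is Galois over ℚ, with m = [M : ℚ]. Let x ∈ 𝒪_M be such that |σ(x)| > 1 for every ring homomorphism σ : M → ℝ. Then for every γ ∈ Gal(M/ℚ) one has |N_{M/ℚ}(x − γ(x))| ≤ 2^m · N_{M/ℚ}(x²). -/
/-!
Over the infinite places `v` of a number field, `|N(z)| = ∏ v(z)^{mult v}`. If `v(z), v(w) ≥ 1`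
then `v(z - w) ≤ v(z) + v(w) ≤ 2 v(z) v(w)`, and multiplying over all places (the multiplicities
add up to the degree) gives `|N(z - w)| ≤ 2^[K:ℚ] |N(z)| |N(w)|`. Apply this to `w = γ z`, which
has the same norm as `z` and whose absolute values are those of `z` at the places `v ∘ γ`.
-/

open NumberField NumberField.InfinitePlace

lemma add_le_two_mul_mul_of_one_le {R : Type*} [CommRing R] [LinearOrder R] [IsStrictOrderedRing R]
    {a b : R} (ha : 1 ≤ a) (hb : 1 ≤ b) : a + b ≤ 2 * a * b := by
  nlinarith

lemma NumberField.abs_norm_sub_le {K : Type*} [Field K] [NumberField K] {z w : K}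
    (hz : ∀ v : InfinitePlace K, 1 ≤ v z) (hw : ∀ v : InfinitePlace K, 1 ≤ v w) :
    |Algebra.norm ℚ (z - w)| ≤ 2 ^ Module.finrank ℚ K * |Algebra.norm ℚ z| * |Algebra.norm ℚ w| := by
  have hprod : ∏ v : InfinitePlace K, v (z - w) ^ mult v
      ≤ ∏ v : InfinitePlace K, (2 * v z * v w) ^ mult v :=
    Finset.prod_le_prod (fun v _ => by positivity) fun v _ =>
      pow_le_pow_left₀ (by positivity)
        ((AbsoluteValue.sub_le_add _ _ _).trans (add_le_two_mul_mul_of_one_le (hz v) (hw v))) _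
  have hnorm (y : K) : ((|Algebra.norm ℚ y| : ℚ) : ℝ) = ∏ v : InfinitePlace K, v y ^ mult v :=
    (prod_eq_abs_norm y).symm
  have hpow : (2 : ℝ) ^ Module.finrank ℚ K = ∏ v : InfinitePlace K, (2 : ℝ) ^ mult v := by
    rw [Finset.prod_pow_eq_pow_sum, sum_mult_eq]
  have hreal : ((|Algebra.norm ℚ (z - w)| : ℚ) : ℝ)
      ≤ 2 ^ Module.finrank ℚ K * ((|Algebra.norm ℚ z| : ℚ) : ℝ) * ((|Algebra.norm ℚ w| : ℚ) : ℝ) := by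
    rw [hnorm, hnorm, hnorm, hpow, ← Finset.prod_mul_distrib, ← Finset.prod_mul_distrib]
    simpa only [mul_pow] using hprod
  exact_mod_cast hreal

lemma NumberField.isTotallyReal_of_forall_im_eq_zero {K : Type*} [Field K]
    (h : ∀ (φ : K →+* ℂ) (y : K), (φ y).im = 0) : IsTotallyReal K where
  isReal v := by
    rw [isReal_iff, ComplexEmbedding.isReal_iff]
    ext y
    exact Complex.conj_eq_iff_im.mpr (h _ y)

lemma NumberField.InfinitePlace.one_lt_of_forall_one_lt_abs {K : Type*} [Field K]
    [IsTotallyReal K] {y : K} (h : ∀ σ : K →+* ℝ, 1 < |σ y|) (v : InfinitePlace K) : 1 < v y := by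
  rw [← norm_embedding_of_isReal (IsTotallyReal.isReal v)]
  exact h _

theorem stmt_7_general (M : Type*) [Field M] [NumberField M]
    (htr : ∀ (σ : M →+* ℂ) (y : M), (σ y).im = 0)
    (m : ℕ) (hm : m = Module.finrank ℚ M)
    (x : 𝓞 M) (hx : ∀ σ : M →+* ℝ, 1 < |σ (algebraMap (𝓞 M) M x)|)
    (γ : M ≃ₐ[ℚ] M) :
    |Algebra.norm ℚ (algebraMap (𝓞 M) M x - γ (algebraMap (𝓞 M) M x))|
      ≤ 2 ^ m * Algebra.norm ℚ ((algebraMap (𝓞 M) M x) ^ 2) := by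
  set y := algebraMap (𝓞 M) M x
  have : IsTotallyReal M := isTotallyReal_of_forall_im_eq_zero htr
  have hy (v : InfinitePlace M) : 1 ≤ v y := (one_lt_of_forall_one_lt_abs hx v).le
  have hγy (v : InfinitePlace M) : 1 ≤ v (γ y) := hy (v.comap γ)
  calc |Algebra.norm ℚ (y - γ y)|
      ≤ 2 ^ m * |Algebra.norm ℚ y| * |Algebra.norm ℚ (γ y)| := hm ▸ abs_norm_sub_le hy hγy
    _ = 2 ^ m * Algebra.norm ℚ (y ^ 2) := by
      rw [Algebra.norm_eq_of_algEquiv, mul_assoc, abs_mul_abs_self, map_pow, sq]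

/-- Let `M` be a totally real number field, Galois over `ℚ`, of degree `m`.
If `x ∈ 𝒪_M` satisfies `|σ(x)| > 1` for every real embedding `σ : M → ℝ`, then for every
`γ ∈ Gal(M/ℚ)` one has `|N_{M/ℚ}(x − γx)| ≤ 2^m · N_{M/ℚ}(x²)`. -/
theorem stmt_7 (M : Type*) [Field M] [NumberField M] [IsGalois ℚ M]
    (htr : ∀ (σ : M →+* ℂ) (y : M), (σ y).im = 0)
    (m : ℕ) (hm : m = Module.finrank ℚ M)
    (x : 𝓞 M) (hx : ∀ σ : M →+* ℝ, 1 < |σ (algebraMap (𝓞 M) M x)|)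
    (γ : M ≃ₐ[ℚ] M) :
    |Algebra.norm ℚ (algebraMap (𝓞 M) M x - γ (algebraMap (𝓞 M) M x))|
      ≤ 2 ^ m * Algebra.norm ℚ ((algebraMap (𝓞 M) M x) ^ 2) :=
  stmt_7_general M htr m hm x hx γ
end

section
/- Let M be a totally real number field that is Galois over ℚ, and let α ∈ 𝒪_M be such that σ(α) > 1 for every ring homomorphism σ : M → ℝ. Let I be a nonzero ideal of 𝒪_M with I ⊆ (2α + 1)²·𝒪_M. Then for every γ ∈ Gal(M/ℚ) one has |N_{M/ℚ}(α − γ(α))| ≤ absNorm(I). -/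
open NumberField

/-!
At every complex embedding `φ` the numbers `a = φ α` and `b = φ (γ α)` are real and positive, so
`|a - b| ≤ a + b ≤ (2a + 1)(2b + 1)`. Multiplying over all embeddings gives
`|N(α - γα)| ≤ |N((2α + 1) · γ(2α + 1))| = |N(2α + 1)|²`, which is the absolute norm of the
principal ideal `(2α + 1)²`, and that divides `absNorm I`.
-/

lemma abs_sub_le_two_mul_add_one_mul {a b : ℝ} (ha : 0 ≤ a) (hb : 0 ≤ b) :
    |a - b| ≤ (2 * a + 1) * (2 * b + 1) :=
  abs_le.mpr ⟨by nlinarith, by nlinarith⟩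

namespace NumberField

lemma ComplexEmbedding.IsReal.norm_sub_le {K : Type*} [Field K] {φ : K →+* ℂ}
    (hφ : ComplexEmbedding.IsReal φ) {x y : K} (hx : 0 ≤ hφ.embedding x)
    (hy : 0 ≤ hφ.embedding y) :
    ‖φ (x - y)‖ ≤ ‖φ ((2 * x + 1) * (2 * y + 1))‖ := by
  rw [← hφ.coe_embedding_apply, ← hφ.coe_embedding_apply, Complex.norm_real,
    Complex.norm_real, Real.norm_eq_abs, Real.norm_eq_abs]
  simp only [map_sub, map_mul, map_add, map_ofNat, map_one]
  exact (abs_sub_le_two_mul_add_one_mul hx hy).trans (le_abs_self _)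

variable {K : Type*} [Field K] [NumberField K]

lemma abs_norm_eq_prod_norm_embeddings (x : K) :
    ((|Algebra.norm ℚ x| : ℚ) : ℝ) = ∏ φ : K →+* ℂ, ‖φ x‖ := by
  rw [Fintype.prod_equiv (RingHom.equivRatAlgHom K ℂ) (fun φ => ‖φ x‖) (fun σ => ‖σ x‖)
      fun _ => rfl,
    ← norm_prod, ← Algebra.norm_eq_prod_embeddings, eq_ratCast, Rat.cast_abs,
    ← Complex.ofReal_ratCast, Complex.norm_real, Real.norm_eq_abs]

lemma abs_norm_le_abs_norm_of_forall_norm_embedding_le {x y : K}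
    (h : ∀ φ : K →+* ℂ, ‖φ x‖ ≤ ‖φ y‖) : |Algebra.norm ℚ x| ≤ |Algebra.norm ℚ y| := by
  rw [← Rat.cast_le (K := ℝ), abs_norm_eq_prod_norm_embeddings,
    abs_norm_eq_prod_norm_embeddings]
  exact Finset.prod_le_prod (fun _ _ => norm_nonneg _) (fun φ _ => h φ)

lemma absNorm_span_singleton_eq_abs_norm (r : 𝓞 K) :
    (Ideal.absNorm (Ideal.span {r}) : ℚ) = |Algebra.norm ℚ (r : K)| := by
  rw [Ideal.absNorm_span_singleton, Nat.cast_natAbs, Int.cast_abs, Algebra.coe_norm_int]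

end NumberField

theorem stmt_8_general (M : Type*) [Field M] [NumberField M]
    (htr : ∀ (σ : M →+* ℂ) (y : M), (σ y).im = 0)
    (α : 𝓞 M) (hα : ∀ σ : M →+* ℝ, 1 < σ (algebraMap (𝓞 M) M α))
    (I : Ideal (𝓞 M)) (hI : I ≠ ⊥)
    (hIα : I ≤ Ideal.span {(2 * α + 1) ^ 2})
    (γ : M ≃ₐ[ℚ] M) :
    |Algebra.norm ℚ (algebraMap (𝓞 M) M α - γ (algebraMap (𝓞 M) M α))|
      ≤ (Ideal.absNorm I : ℚ) := by
  set x := algebraMap (𝓞 M) M α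
  have hreal (φ : M →+* ℂ) : ComplexEmbedding.IsReal φ :=
    ComplexEmbedding.isReal_iff.mpr (RingHom.ext fun y => Complex.conj_eq_iff_im.mpr (htr φ y))
  have hle (φ : M →+* ℂ) : ‖φ (x - γ x)‖ ≤ ‖φ ((2 * x + 1) * γ (2 * x + 1))‖ := by
    rw [show γ (2 * x + 1) = 2 * γ x + 1 by rw [map_add, map_mul, map_ofNat, map_one]]
    exact (hreal φ).norm_sub_le (zero_le_one.trans (hα _).le)
      (zero_le_one.trans (hα ((hreal φ).embedding.comp γ)).le)
  calc |Algebra.norm ℚ (x - γ x)|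
      ≤ |Algebra.norm ℚ ((2 * x + 1) * γ (2 * x + 1))| :=
        abs_norm_le_abs_norm_of_forall_norm_embedding_le hle
    _ = |Algebra.norm ℚ (((2 * α + 1) ^ 2 : 𝓞 M) : M)| := by
        rw [map_mul, Algebra.norm_eq_of_algEquiv, ← map_mul, ← sq]; simp [x, map_ofNat]
    _ = Ideal.absNorm (Ideal.span {(2 * α + 1) ^ 2}) :=
        (absNorm_span_singleton_eq_abs_norm _).symm
    _ ≤ Ideal.absNorm I := by
        exact_mod_cast Nat.le_of_dvd (Nat.pos_of_ne_zero (Ideal.absNorm_eq_zero_iff.not.mpr hI))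
          (Ideal.absNorm_dvd_absNorm_of_le hIα)

/-- Let `M` be a totally real number field, Galois over `ℚ`, and `α ∈ 𝒪_M`
with `σ(α) > 1` for every real embedding `σ : M → ℝ`.  If `I` is a nonzero ideal of `𝒪_M` with
`I ⊆ (2α+1)²·𝒪_M`, then `|N_{M/ℚ}(α − γα)| ≤ absNorm I` for every `γ ∈ Gal(M/ℚ)`. -/
theorem stmt_8 (M : Type*) [Field M] [NumberField M] [IsGalois ℚ M]
    (htr : ∀ (σ : M →+* ℂ) (y : M), (σ y).im = 0)
    (α : 𝓞 M) (hα : ∀ σ : M →+* ℝ, 1 < σ (algebraMap (𝓞 M) M α))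
    (I : Ideal (𝓞 M)) (hI : I ≠ ⊥)
    (hIα : I ≤ Ideal.span {(2 * α + 1) ^ 2})
    (γ : M ≃ₐ[ℚ] M) :
    |Algebra.norm ℚ (algebraMap (𝓞 M) M α - γ (algebraMap (𝓞 M) M α))|
      ≤ (Ideal.absNorm I : ℚ) :=
  stmt_8_general M htr α hα I hI hIα γ
end

section
/- Let 𝐋 be a totally real field that is an algebraic (possibly infinite-degree) extension of ℚ, and let K ⊆ 𝐋 be a number field. Let α ∈ 𝒪_𝐋 and suppose there exist b ∈ 𝒪_K, an ideal I of 𝒪_K, and u₁, u₂, u₃, u₄ ∈ 𝒪_𝐋 such that: I·𝒪_𝐋 ⊆ (2α + 1)²·𝒪_𝐋, α = 1 + u₁² + u₂² + u₃² + u₄², and α − b ∈ I·𝒪_𝐋. Then α lies in K (equivalently, α is in the image of 𝒪_K in 𝒪_𝐋). -/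
/-- The natural map between integral closures of `ℤ` induced by a field extension `K → L`. -/
noncomputable def intMap (K L : Type*) [Field K] [Field L] [Algebra K L] :
    integralClosure ℤ K →+* integralClosure ℤ L where
  toFun x := ⟨algebraMap K L (x : K), IsIntegral.map ((algebraMap K L).toIntAlgHom) x.2⟩
  map_one' := by ext; simp
  map_mul' x y := by ext; simp
  map_zero' := by ext; simp
  map_add' x y := by ext; simp

/-- The induced algebra structure `𝒪_K → 𝒪_L`. -/
noncomputable instance intClosureAlgebra (K L : Type*) [Field K] [Field L] [Algebra K L] :
    Algebra (integralClosure ℤ K) (integralClosure ℤ L) :=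
  (intMap K L).toAlgebra

/-!
Let `φ, ψ` be two `K`-embeddings of `L` into `ℂ`. Since `α ≡ b (mod I𝒪_L)` and `I𝒪_L ⊆ (2α+1)²`,
the difference `φ α - ψ α` is divisible by both `(2φα+1)²` and `(2ψα+1)²` among algebraic
integers, so `(φα - ψα)² = e ((2φα+1)(2ψα+1))²` for an algebraic integer `e`. Every conjugate of
`α = 1 + Σ uᵢ²` is a nonnegative real, and `|x - y| < (2x+1)(2y+1)` for `x, y ≥ 0`, so every
conjugate of `e` lies in the open unit disc; by Kronecker's theorem `e = 0`. Hence all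
`K`-embeddings agree on `α`, which in characteristic zero means `α ∈ K`.
-/

open ComplexOrder IntermediateField

theorem IsIntegral.eq_zero_of_forall_norm_algHom_lt_one {F : Type*} [Field F] [CharZero F]
    [Algebra.IsAlgebraic ℚ F] {x : F} (hx : IsIntegral ℤ x)
    (h : ∀ τ : F →ₐ[ℚ] ℂ, ‖τ x‖ < 1) : x = 0 := by
  by_contra hx0
  have hroot : ∀ z ∈ (minpoly ℚ x).rootSet ℂ, ‖z‖ < 1 := by
    rw [← Algebra.IsAlgebraic.range_eval_eq_rootSet_minpoly]
    rintro _ ⟨τ, rfl⟩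
    exact h τ
  -- Kronecker's theorem in the number field `ℚ⟮x⟯` makes `x` a root of unity.
  have := adjoin.finiteDimensional (hx.tower_top (A := ℚ))
  have : NumberField ℚ⟮x⟯ := ⟨⟩
  have hgen : IsIntegral ℤ (AdjoinSimple.gen ℚ x) :=
    (isIntegral_algebraMap_iff (algebraMap ℚ⟮x⟯ F).injective).1 hx
  obtain ⟨n, hn, hpow⟩ := NumberField.Embeddings.pow_eq_one_of_norm_le_one ℚ⟮x⟯ ℂ
    (fun h => hx0 (congrArg Subtype.val h)) hgen fun φ => (hroot _ <| by
      rw [← minpoly_gen]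
      exact (Algebra.IsAlgebraic.range_eval_eq_rootSet_minpoly ℂ _).subset
        ⟨φ.toRatAlgHom, rfl⟩).le
  obtain ⟨τ⟩ : Nonempty (F →ₐ[ℚ] ℂ) := ⟨IsAlgClosed.lift⟩
  have : ‖τ x‖ ^ n = 1 := by
    rw [← norm_pow, ← map_pow, ← AdjoinSimple.algebraMap_gen ℚ x, ← map_pow, hpow]; simp
  exact (h τ).ne ((pow_eq_one_iff_of_nonneg (norm_nonneg _) hn.ne').1 this)

theorem norm_sub_lt_norm_two_mul_add_one_mul {z w : ℂ} (hz : 0 ≤ z) (hw : 0 ≤ w) :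
    ‖z - w‖ < ‖(2 * z + 1) * (2 * w + 1)‖ := by
  obtain ⟨x, hx, rfl⟩ : ∃ x : ℝ, 0 ≤ x ∧ (x : ℂ) = z :=
    ⟨z.re, (Complex.nonneg_iff.1 hz).1, (Complex.eq_re_of_ofReal_le (r := 0) (by simpa)).symm⟩
  obtain ⟨y, hy, rfl⟩ : ∃ y : ℝ, 0 ≤ y ∧ (y : ℂ) = w :=
    ⟨w.re, (Complex.nonneg_iff.1 hw).1, (Complex.eq_re_of_ofReal_le (r := 0) (by simpa)).symm⟩
  have hcast : (2 * (x : ℂ) + 1) * (2 * y + 1) = ((2 * x + 1) * (2 * y + 1) : ℝ) := by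
    push_cast; ring
  rw [hcast, ← Complex.ofReal_sub, Complex.norm_real, Complex.norm_real, Real.norm_eq_abs,
    Real.norm_eq_abs, abs_of_pos (a := (2 * x + 1) * (2 * y + 1)) (by positivity), abs_lt]
  constructor <;> nlinarith [mul_nonneg hx hy]

theorem eq_of_sq_sub_eq_mul_sq {F : Type*} [Field F] [CharZero F] [Algebra.IsAlgebraic ℚ F]
    {a b e : F} (he : IsIntegral ℤ e) (hab : ∀ τ : F →ₐ[ℚ] ℂ, 0 ≤ τ a ∧ 0 ≤ τ b)
    (h : (a - b) ^ 2 = e * ((2 * a + 1) * (2 * b + 1)) ^ 2) : a = b := by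
  have he0 : e = 0 := he.eq_zero_of_forall_norm_algHom_lt_one fun τ => by
    obtain ⟨ha, hb⟩ := hab τ
    have hlt := norm_sub_lt_norm_two_mul_add_one_mul ha hb
    have hτ : ‖τ a - τ b‖ ^ 2 = ‖τ e‖ * ‖(2 * τ a + 1) * (2 * τ b + 1)‖ ^ 2 := by
      simpa only [map_pow, map_mul, map_sub, map_add, map_one, map_ofNat, norm_pow, norm_mul]
        using congrArg (‖τ ·‖) h
    refine lt_of_mul_lt_mul_right (a := ‖(2 * τ a + 1) * (2 * τ b + 1)‖ ^ 2) ?_ (by positivity)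
    rw [← hτ, one_mul]
    gcongr
  rwa [he0, zero_mul, sq_eq_zero_iff, sub_eq_zero] at h

theorem zero_le_apply_one_add_sq {L : Type*} [Ring L] {σ : L →+* ℂ} (hσ : ∀ y, (σ y).im = 0)
    (u₁ u₂ u₃ u₄ : L) : 0 ≤ σ (1 + u₁ ^ 2 + u₂ ^ 2 + u₃ ^ 2 + u₄ ^ 2) := by
  have hsq (u : L) : 0 ≤ σ (u ^ 2) := by
    rw [map_pow]
    exact Complex.sq_nonneg_iff.2 (hσ u)
  simp only [map_add, map_one]
  exact add_nonneg (add_nonneg (add_nonneg (add_nonneg zero_le_one (hsq u₁)) (hsq u₂)) (hsq u₃))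
    (hsq u₄)

theorem apply_sub_apply_mem_span_singleton {R₀ R S : Type*} [CommRing R₀] [CommRing R]
    [CommRing S] (g : R₀ →+* R) {Φ Ψ : R →+* S} (hg : Φ.comp g = Ψ.comp g) {I : Ideal R₀}
    {a c : R} {b : R₀} (hI : I.map g ≤ Ideal.span {c}) (ha : a - g b ∈ I.map g) :
    Φ a - Ψ a ∈ Ideal.span {Φ c} := by
  have hΨ : (I.map g).map Ψ = (I.map g).map Φ := by rw [Ideal.map_map, Ideal.map_map, hg]
  have hΦ : (I.map g).map Φ ≤ Ideal.span {Φ c} := by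
    simpa [Ideal.map_span] using Ideal.map_mono (f := Φ) hI
  have hb : Φ (g b) = Ψ (g b) := RingHom.congr_fun hg b
  have : Φ a - Ψ a = Φ (a - g b) - Ψ (a - g b) := by rw [map_sub, map_sub, hb]; ring
  rw [this]
  exact hΦ (sub_mem (Ideal.mem_map_of_mem Φ ha) (hΨ ▸ Ideal.mem_map_of_mem Ψ ha))

theorem mem_range_algebraMap_of_forall_algHom_eq {K L : Type*} (A : Type*) [Field K] [Field L]
    [Field A] [Algebra K L] [Algebra K A] [IsAlgClosed A] [Algebra.IsAlgebraic K L]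
    [PerfectField K] {x : L} (h : ∀ φ ψ : L →ₐ[K] A, φ x = ψ x) :
    x ∈ (algebraMap K L).range := by
  have hroots : Fintype.card ((minpoly K x).rootSet A) ≤ 1 := by
    rw [Fintype.card_le_one_iff_subsingleton, Set.subsingleton_coe,
      ← Algebra.IsAlgebraic.range_eval_eq_rootSet_minpoly]
    rintro _ ⟨φ, rfl⟩ _ ⟨ψ, rfl⟩
    exact h φ ψ
  rw [Polynomial.card_rootSet_eq_natDegree (Algebra.IsSeparable.isSeparable K x)
    (IsAlgClosed.splits _)] at hroots
  exact minpoly.natDegree_eq_one_iff.1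
    (le_antisymm hroots (minpoly.natDegree_pos (Algebra.IsIntegral.isIntegral x)))

theorem exists_isIntegral_mul_sq_eq_apply_sub_apply {L K : Type*} [Field L] [Field K]
    [Algebra K L] {α : integralClosure ℤ L} {b : integralClosure ℤ K}
    {I : Ideal (integralClosure ℤ K)}
    (h1 : I.map (algebraMap (integralClosure ℤ K) (integralClosure ℤ L))
      ≤ Ideal.span {(2 * α + 1) ^ 2})
    (h3 : α - algebraMap (integralClosure ℤ K) (integralClosure ℤ L) b
      ∈ I.map (algebraMap (integralClosure ℤ K) (integralClosure ℤ L)))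
    {φ ψ : L →+* ℂ} (hφψ : φ.comp (algebraMap K L) = ψ.comp (algebraMap K L)) :
    ∃ r : ℂ, IsIntegral ℤ r ∧ r * (2 * φ α + 1) ^ 2 = φ α - ψ α := by
  let Φ : integralClosure ℤ L →+* integralClosure ℤ ℂ := φ.toIntAlgHom.mapIntegralClosure
  let Ψ : integralClosure ℤ L →+* integralClosure ℤ ℂ := ψ.toIntAlgHom.mapIntegralClosure
  have hg : Φ.comp (algebraMap (integralClosure ℤ K) (integralClosure ℤ L)) =
      Ψ.comp (algebraMap _ _) :=
    RingHom.ext fun k => Subtype.ext (RingHom.congr_fun hφψ k)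
  obtain ⟨r, hr⟩ := Ideal.mem_span_singleton'.1 (apply_sub_apply_mem_span_singleton _ hg h1 h3)
  simp only [map_pow, map_add, map_mul, map_one, map_ofNat] at hr
  have two : ((2 : integralClosure ℤ ℂ) : ℂ) = 2 := rfl
  exact ⟨r, r.2, by simpa [Φ, Ψ, two] using congrArg Subtype.val hr⟩

theorem apply_eq_of_comp_algebraMap_eq {L : Type*} [Field L] [CharZero L]
    [Algebra.IsAlgebraic ℚ L] (htr : ∀ (σ : L →+* ℂ) (y : L), (σ y).im = 0)
    {K : Type*} [Field K] [Algebra K L] {α : integralClosure ℤ L}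
    {b : integralClosure ℤ K} {I : Ideal (integralClosure ℤ K)}
    {u₁ u₂ u₃ u₄ : integralClosure ℤ L}
    (h1 : I.map (algebraMap (integralClosure ℤ K) (integralClosure ℤ L))
      ≤ Ideal.span {(2 * α + 1) ^ 2})
    (h2 : α = 1 + u₁ ^ 2 + u₂ ^ 2 + u₃ ^ 2 + u₄ ^ 2)
    (h3 : α - algebraMap (integralClosure ℤ K) (integralClosure ℤ L) b
      ∈ I.map (algebraMap (integralClosure ℤ K) (integralClosure ℤ L)))
    {φ ψ : L →+* ℂ} (hφψ : φ.comp (algebraMap K L) = ψ.comp (algebraMap K L)) :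
    φ α = ψ α := by
  obtain ⟨r, hr, hrα⟩ := exists_isIntegral_mul_sq_eq_apply_sub_apply h1 h3 hφψ
  obtain ⟨s, hs, hsα⟩ := exists_isIntegral_mul_sq_eq_apply_sub_apply h1 h3 hφψ.symm
  -- Embeddings `τ` of `F = ℚ̄ ⊆ ℂ` turn `φ, ψ` into embeddings `τ ∘ φ, τ ∘ ψ` of the totally
  -- real field `L`.
  let F := algebraicClosure ℚ ℂ
  have : Algebra.IsAlgebraic ℚ F := algebraicClosure.isAlgebraic ℚ ℂ
  have hmem (σ : L →+* ℂ) (y : L) : σ y ∈ F :=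
    mem_algebraicClosure_iff.2 ((Algebra.IsAlgebraic.isAlgebraic y).algHom σ.toRatAlgHom)
  let φF := φ.codRestrict F (hmem φ)
  let ψF := ψ.codRestrict F (hmem ψ)
  have hrs : IsIntegral ℤ (-(r * s)) := (hr.mul hs).neg
  let e : F := ⟨-(r * s), mem_algebraicClosure_iff.2 hrs.tower_top.isAlgebraic⟩
  suffices φF α = ψF α from congrArg Subtype.val this
  refine eq_of_sq_sub_eq_mul_sq (e := e) ?_ (fun τ => ?_) (Subtype.ext ?_)
  · exact (isIntegral_algebraMap_iff (algebraMap F ℂ).injective).1 hrs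
  · have hα : (α : L) = 1 + (u₁ : L) ^ 2 + (u₂ : L) ^ 2 + (u₃ : L) ^ 2 + (u₄ : L) ^ 2 := by
      rw [h2]; push_cast; rfl
    rw [hα]
    exact ⟨zero_le_apply_one_add_sq (htr (τ.toRingHom.comp φF)) _ _ _ _,
      zero_le_apply_one_add_sq (htr (τ.toRingHom.comp ψF)) _ _ _ _⟩
  · show (φ α - ψ α) ^ 2 = -(r * s) * ((2 * φ α + 1) * (2 * ψ α + 1)) ^ 2
    linear_combination (s * (2 * ψ α + 1) ^ 2) * hrα + (φ α - ψ α) * hsα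

/-- Corollary `CONG2`.  Let `𝐋` be a totally real algebraic extension of
`ℚ`, `K ⊆ 𝐋` a number field, and `α ∈ 𝒪_𝐋`.  If there exist `b ∈ 𝒪_K`, an ideal `I` of
`𝒪_K`, and `u₁, …, u₄ ∈ 𝒪_𝐋` with `I·𝒪_𝐋 ⊆ (2α+1)²·𝒪_𝐋`, `α = 1 + u₁² + ⋯ + u₄²`, and
`α ≡ b (mod I·𝒪_𝐋)`, then `α` comes from `𝒪_K`. -/
theorem stmt_9 (L : Type*) [Field L] [CharZero L] [Algebra.IsAlgebraic ℚ L]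
    (htr : ∀ (σ : L →+* ℂ) (y : L), (σ y).im = 0)
    (K : Type*) [Field K] [NumberField K] [Algebra K L]
    (α : integralClosure ℤ L)
    (b : integralClosure ℤ K) (I : Ideal (integralClosure ℤ K))
    (u₁ u₂ u₃ u₄ : integralClosure ℤ L)
    (h1 : I.map (algebraMap (integralClosure ℤ K) (integralClosure ℤ L))
      ≤ Ideal.span {(2 * α + 1) ^ 2})
    (h2 : α = 1 + u₁ ^ 2 + u₂ ^ 2 + u₃ ^ 2 + u₄ ^ 2)
    (h3 : α - algebraMap (integralClosure ℤ K) (integralClosure ℤ L) b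
      ∈ I.map (algebraMap (integralClosure ℤ K) (integralClosure ℤ L))) :
    ∃ y : integralClosure ℤ K, algebraMap K L (y : K) = (α : L) := by
  have : Algebra.IsAlgebraic K L := Algebra.IsAlgebraic.tower_top (K := ℚ) K
  let : Algebra K ℂ := (IsAlgClosed.lift : K →ₐ[ℚ] ℂ).toAlgebra
  obtain ⟨k, hk⟩ := mem_range_algebraMap_of_forall_algHom_eq ℂ fun φ ψ : L →ₐ[K] ℂ =>
    apply_eq_of_comp_algebraMap_eq htr h1 h2 h3 (φ := φ) (ψ := ψ)
      (RingHom.ext fun k => (φ.commutes k).trans (ψ.commutes k).symm)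
  exact ⟨⟨k, (isIntegral_algebraMap_iff (algebraMap K L).injective).1 (hk ▸ α.2)⟩, hk⟩
end

section
/- Let K be a totally real number field and let Ω ⊆ K be an infinite set. Then for every real number N > 0 there exist u, v ∈ Ω with u ≠ v such that for every ring homomorphism σ : K → ℝ one has |σ( ((1/(u − v))² + 1)·(u² + 1) )| > N. -/
/-!
Pigeonhole on a finite coding of the real embeddings: code each real number `t` by `⌊t / ε⌋`
when `|t| ≤ C` and by a single symbol otherwise. Only finitely many codes occur, so the
infinite set `Ω` contains `u ≠ v` with the same code under every embedding `σ`. Then either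
`|σ u| > C`, or `|σ u - σ v| < ε = C⁻¹`; in both cases one of the two factors of
`σ(((u - v)⁻¹² + 1)(u² + 1))`, each at least `1`, exceeds `C² ≥ N`.
-/

open Set

noncomputable def boxCode (C ε t : ℝ) : Option ℤ :=
  if |t| ≤ C then some ⌊t / ε⌋ else none

lemma finite_range_boxCode (C : ℝ) {ε : ℝ} (hε : 0 < ε) : (range (boxCode C ε)).Finite := by
  refine ((finite_Icc ⌊-C / ε⌋ ⌊C / ε⌋).image some |>.insert none).subset ?_
  rintro _ ⟨t, rfl⟩
  unfold boxCode
  split_ifs with ht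
  · obtain ⟨h₁, h₂⟩ := abs_le.mp ht
    exact mem_insert_of_mem _ ⟨⌊t / ε⌋, ⟨Int.floor_mono (div_le_div_of_nonneg_right h₁ hε.le),
      Int.floor_mono (div_le_div_of_nonneg_right h₂ hε.le)⟩, rfl⟩
  · exact mem_insert _ _

lemma lt_abs_or_abs_sub_lt_of_boxCode_eq {C ε s t : ℝ} (hε : 0 < ε)
    (h : boxCode C ε s = boxCode C ε t) : C < |s| ∨ |s - t| < ε := by
  unfold boxCode at h
  split_ifs at h with hs ht
  · right
    have := Int.abs_sub_lt_one_of_floor_eq_floor (Option.some_injective _ h)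
    rwa [← sub_div, abs_div, abs_of_pos hε, div_lt_one hε] at this
  all_goals exact Or.inl (not_le.mp hs)

theorem Set.Infinite.exists_ne_forall_lt_abs_or_abs_sub_lt {X ι : Type*} [Finite ι]
    {S : Set X} (hS : S.Infinite) (f : ι → X → ℝ) (C : ℝ) {ε : ℝ} (hε : 0 < ε) :
    ∃ u ∈ S, ∃ v ∈ S, u ≠ v ∧ ∀ i, C < |f i u| ∨ |f i u - f i v| < ε := by
  obtain ⟨u, hu, v, hv, huv, hcode⟩ := hS.exists_ne_map_eq_of_mapsTo
    (f := fun x i ↦ boxCode C ε (f i x)) (t := univ.pi fun _ ↦ range (boxCode C ε))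
    (fun x _ i _ ↦ mem_range_self _) (Finite.pi fun _ ↦ finite_range_boxCode C hε)
  exact ⟨u, hu, v, hv, huv, fun i ↦ lt_abs_or_abs_sub_lt_of_boxCode_eq hε (congrFun hcode i)⟩

lemma sq_lt_inv_sub_sq_add_one_mul_sq_add_one {C a b : ℝ} (hC : 0 < C) (hab : a ≠ b)
    (h : C < |a| ∨ |a - b| < C⁻¹) : C ^ 2 < ((a - b)⁻¹ ^ 2 + 1) * (a ^ 2 + 1) := by
  suffices C < |a| ∨ C < |(a - b)⁻¹| by
    have sq_lt_sq_of_lt_abs (x : ℝ) (hx : C < |x|) : C ^ 2 < x ^ 2 :=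
      sq_abs x ▸ pow_lt_pow_left₀ hx hC.le two_ne_zero
    rcases this with h | h <;>
      nlinarith [sq_lt_sq_of_lt_abs _ h, sq_nonneg a, sq_nonneg (a - b)⁻¹]
  rwa [abs_inv, lt_inv_comm₀ hC (abs_pos.mpr (sub_ne_zero.mpr hab))]

theorem stmt_11_general (K : Type*) [Field K] [NumberField K]
    (Ω : Set K) (hΩ : Ω.Infinite) (N : ℝ) :
    ∃ u ∈ Ω, ∃ v ∈ Ω, u ≠ v ∧ ∀ σ : K →+* ℝ,
      N < |σ ((((u - v)⁻¹) ^ 2 + 1) * (u ^ 2 + 1))| := by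
  obtain ⟨C, hC, hNC⟩ : ∃ C : ℝ, 0 < C ∧ N ≤ C ^ 2 :=
    ⟨max N 1, by positivity, (le_max_left N 1).trans (by nlinarith [le_max_right N 1])⟩
  obtain ⟨u, hu, v, hv, huv, h⟩ :=
    hΩ.exists_ne_forall_lt_abs_or_abs_sub_lt (fun σ : K →+* ℝ ↦ σ) C (inv_pos.mpr hC)
  refine ⟨u, hu, v, hv, huv, fun σ ↦ ?_⟩
  have hbound := sq_lt_inv_sub_sq_add_one_mul_sq_add_one hC (σ.injective.ne huv) (h σ)
  simp only [map_mul, map_add, map_pow, map_inv₀, map_sub, map_one]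
  rw [abs_of_pos (by positivity)]
  exact hNC.trans_lt hbound

/-- Let `K` be a totally real number field and `Ω ⊆ K` infinite.  For every
real `N > 0` there exist distinct `u, v ∈ Ω` such that
`|σ(((1/(u−v))² + 1)·(u² + 1))| > N` for every real embedding `σ : K → ℝ`. -/
theorem stmt_11 (K : Type*) [Field K] [NumberField K]
    (htr : ∀ (σ : K →+* ℂ) (y : K), (σ y).im = 0)
    (Ω : Set K) (hΩ : Ω.Infinite) (N : ℝ) (hN : 0 < N) :
    ∃ u ∈ Ω, ∃ v ∈ Ω, u ≠ v ∧ ∀ σ : K →+* ℝ,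
      N < |σ ((((u - v)⁻¹) ^ 2 + 1) * (u ^ 2 + 1))| :=
  stmt_11_general K Ω hΩ N
end

section
/- Let L be a totally real number field and N a number field containing L with [N : L] = 4. Let d ∈ L and δ, β ∈ N with δ² = d, β² = −d, and N = L(δ, β). Set F = L(δ) and M = L(β), intermediate fields of N/L. Let n ≥ 3 be a rational integer, and let x be a unit of 𝒪_N such that N_{N/F}(x) = 1 and x ≡ 1 (mod n·𝒪_N), i.e., x − 1 ∈ n·𝒪_N. Then x lies in M = L(β). -/
/-!
Let `σ` and `τ` be the nontrivial automorphisms of `N` over `F = L(δ)` and over `M = L(β)`, so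
that `σ` negates `β` and `τ` negates `δ`; the norm condition says `σ x = x⁻¹`. Since `L` is totally
real, `d` is real under every complex embedding `φ` of `N`, so one of `φ δ`, `φ β` is real and the
other purely imaginary: complex conjugation on `φ(N)` is induced by `σ` or by `τ`. Both invert
`y = x / τ x`, hence `|φ y| = 1` for every `φ`. As `y ≡ 1 mod n`, the norm of `y - 1` is divisible
by `n ^ [N : ℚ]` and at most `2 ^ [N : ℚ]` in absolute value, so `n ≥ 3` forces `y = 1`, i.e.
`τ x = x`, which puts `x` in `M`.
-/

open NumberField Polynomial IntermediateField ComplexConjugate Module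

theorem RingHom.ext_of_adjoin_eq_top {R S A : Type*} [CommSemiring R] [Semiring S] [Algebra R S]
    [Semiring A] {s : Set S} (hs : Algebra.adjoin R s = ⊤) {f g : S →+* A}
    (hR : f.comp (algebraMap R S) = g.comp (algebraMap R S)) (h : Set.EqOn f g s) : f = g := by
  ext z
  have hz : z ∈ Algebra.adjoin R s := hs ▸ Algebra.mem_top
  induction hz using Algebra.adjoin_induction with
  | mem w hw => exact h hw
  | algebraMap a => exact RingHom.congr_fun hR a
  | add a b _ _ ha hb => rw [map_add, map_add, ha, hb]
  | mul a b _ _ ha hb => rw [map_mul, map_mul, ha, hb]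

namespace Algebra.IsQuadraticExtension

variable {K E : Type*} [Field K] [Field E] [Algebra K E] [IsQuadraticExtension K E]
  [Algebra.IsSeparable K E]

theorem card_aut_eq_two : Nat.card Gal(E/K) = 2 := by
  rw [IsGalois.card_aut_eq_finrank, finrank_eq_two]

theorem exists_ne_one : ∃ σ : Gal(E/K), σ ≠ 1 := by
  have : Nontrivial Gal(E/K) :=
    Finite.one_lt_card_iff_nontrivial.1 (by rw [card_aut_eq_two]; norm_num)
  exact exists_ne 1

theorem eq_one_or_eq {σ : Gal(E/K)} (hσ : σ ≠ 1) (g : Gal(E/K)) : g = 1 ∨ g = σ :=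
  or_iff_not_imp_left.2 fun hg ↦ ((Nat.card_eq_two_iff' 1).1 card_aut_eq_two).unique hg hσ

theorem mem_bot_of_apply_eq_self {σ : Gal(E/K)} (hσ : σ ≠ 1) {z : E} (hz : σ z = z) :
    z ∈ (⊥ : IntermediateField K E) :=
  (IsGalois.mem_bot_iff_fixed z).2 fun g ↦ by
    rcases eq_one_or_eq hσ g with rfl | rfl
    exacts [rfl, hz]

theorem apply_eq_neg {σ : Gal(E/K)} (hσ : σ ≠ 1) {b : E} {c : K}
    (hb : b ^ 2 = algebraMap K E c) (hgen : K⟮b⟯ = ⊤) : σ b = -b := by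
  have hsq : σ b ^ 2 = b ^ 2 := by rw [← map_pow, hb, AlgEquiv.commutes]
  refine (sq_eq_sq_iff_eq_or_eq_neg.1 hsq).resolve_left fun hfix ↦ ?_
  have htop : (⊥ : IntermediateField K E) = ⊤ := by
    rw [← hgen, eq_comm, adjoin_simple_eq_bot_iff]
    exact mem_bot_of_apply_eq_self hσ hfix
  have := finrank_eq_two K E
  rw [← finrank_top', ← htop, IntermediateField.finrank_bot] at this
  exact absurd this (by norm_num)

theorem algebraMap_norm_eq_mul {σ : Gal(E/K)} (hσ : σ ≠ 1) (z : E) :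
    algebraMap K E (Algebra.norm K z) = z * σ z := by
  classical
  have huniv : (Finset.univ : Finset Gal(E/K)) = {1, σ} :=
    (Finset.eq_univ_of_forall fun g ↦ by simpa using eq_one_or_eq hσ g).symm
  rw [Algebra.norm_eq_prod_automorphisms, huniv, Finset.prod_pair hσ.symm, AlgEquiv.one_apply]

end Algebra.IsQuadraticExtension

theorem IntermediateField.finrank_adjoin_simple_le_two {K E : Type*} [Field K] [Field E]
    [Algebra K E] {b : E} {c : K} (hb : b ^ 2 = algebraMap K E c) : finrank K K⟮b⟯ ≤ 2 := by
  have hmonic : (X ^ 2 - C c).Monic := monic_X_pow_sub_C c two_ne_zero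
  have hroot : aeval b (X ^ 2 - C c) = 0 := by simp [hb]
  rw [adjoin.finrank ⟨_, hmonic, by simpa [aeval_def] using hroot⟩,
    ← natDegree_X_pow_sub_C (n := 2) (r := c)]
  exact natDegree_le_of_dvd (minpoly.dvd K b hroot) hmonic.ne_zero

theorem IntermediateField.adjoin_simple_adjoin_simple_eq_top {K E : Type*} [Field K] [Field E]
    [Algebra K E] {a b : E} (h : K⟮a, b⟯ = ⊤) : K⟮a⟯⟮b⟯ = ⊤ :=
  restrictScalars_injective K (by rw [adjoin_simple_adjoin_simple, h, restrictScalars_top])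

theorem IntermediateField.isQuadraticExtension_adjoin_of_finrank_eq_four {L N : Type*} [Field L]
    [Field N] [Algebra L N] {a b : L} {δ β : N} (hδ : δ ^ 2 = algebraMap L N a)
    (hβ : β ^ 2 = algebraMap L N b) (hgen : L⟮δ, β⟯ = ⊤) (h4 : finrank L N = 4) :
    Algebra.IsQuadraticExtension L⟮δ⟯ N := by
  have : FiniteDimensional L N := finite_of_finrank_pos (by omega)
  have hlow : finrank L L⟮δ⟯ ≤ 2 := finrank_adjoin_simple_le_two hδ
  have hup : finrank L⟮δ⟯ N ≤ 2 := by
    rw [← finrank_top', ← adjoin_simple_adjoin_simple_eq_top hgen]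
    exact finrank_adjoin_simple_le_two (c := algebraMap L L⟮δ⟯ b) hβ
  have hmul : finrank L L⟮δ⟯ * finrank L⟮δ⟯ N = 4 := by rw [finrank_mul_finrank, h4]
  exact ⟨by nlinarith⟩

namespace Complex

theorem conj_eq_self_of_sq_eq_ofReal {z : ℂ} {r : ℝ} (hr : 0 ≤ r) (h : z ^ 2 = r) :
    conj z = z := by
  have : z = √r ∨ z = -√r := by
    rw [← sq_eq_sq_iff_eq_or_eq_neg, h, ← ofReal_pow, Real.sq_sqrt hr]
  rcases this with rfl | rfl <;> simp only [map_neg, conj_ofReal]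

theorem conj_eq_neg_of_sq_eq_ofReal {z : ℂ} {r : ℝ} (hr : r ≤ 0) (h : z ^ 2 = r) :
    conj z = -z := by
  have hzI := conj_eq_self_of_sq_eq_ofReal (z := z * I) (neg_nonneg.2 hr)
    (by rw [mul_pow, I_sq, h]; push_cast; ring)
  rw [map_mul, conj_I] at hzI
  linear_combination I * hzI + (conj z + z) * I_sq

end Complex

theorem NumberField.ComplexEmbedding.IsConj.norm_eq_one_of_mul_apply_eq_one {k K : Type*}
    [Field k] [Field K] [Algebra k K] {φ : K →+* ℂ} {σ : Gal(K/k)} (h : IsConj φ σ) {y : K}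
    (hy : y * σ y = 1) : ‖φ y‖ = 1 := by
  have : (‖φ y‖ : ℂ) ^ 2 = 1 := by
    rw [← Complex.mul_conj', starRingEnd_apply, ← h.eq, ← map_mul, hy, map_one]
  exact (pow_eq_one_iff_of_nonneg (norm_nonneg _) two_ne_zero).1 (by exact_mod_cast this)

section Biquadratic

open NumberField.ComplexEmbedding

variable {L N : Type*} [Field L] [Field N] [Algebra L N] {d : L} {δ β : N}

theorem isConj_or_isConj_of_sq_eq (htr : ∀ (ψ : L →+* ℂ) (y : L), (ψ y).im = 0)
    (hδ : δ ^ 2 = algebraMap L N d) (hβ : β ^ 2 = -algebraMap L N d)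
    (hgen : Algebra.adjoin L {δ, β} = ⊤) {σ τ : Gal(N/L)} (hσδ : σ δ = δ) (hσβ : σ β = -β)
    (hτδ : τ δ = -δ) (hτβ : τ β = β) (φ : N →+* ℂ) : IsConj φ σ ∨ IsConj φ τ := by
  have hreal (a : L) : conj (φ (algebraMap L N a)) = φ (algebraMap L N a) :=
    Complex.conj_eq_iff_im.2 (htr (φ.comp (algebraMap L N)) a)
  obtain ⟨r, hr⟩ := Complex.conj_eq_iff_real.1 (hreal d)
  have hδr : φ δ ^ 2 = r := by rw [← map_pow, hδ, hr]
  have hβr : φ β ^ 2 = (-r : ℝ) := by rw [← map_pow, hβ, map_neg, hr, Complex.ofReal_neg]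
  have isConj_of {ρ : Gal(N/L)} (h₁ : conj (φ δ) = φ (ρ δ)) (h₂ : conj (φ β) = φ (ρ β)) :
      IsConj φ ρ :=
    RingHom.ext_of_adjoin_eq_top hgen (RingHom.ext fun a ↦ by simp [conjugate_coe_eq, hreal])
      (by rintro _ (rfl | rfl) <;> simpa [conjugate_coe_eq])
  rcases le_total 0 r with hr0 | hr0
  · refine .inl (isConj_of ?_ ?_)
    · rw [hσδ, Complex.conj_eq_self_of_sq_eq_ofReal hr0 hδr]
    · rw [hσβ, map_neg, Complex.conj_eq_neg_of_sq_eq_ofReal (by linarith) hβr]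
  · refine .inr (isConj_of ?_ ?_)
    · rw [hτδ, map_neg, Complex.conj_eq_neg_of_sq_eq_ofReal hr0 hδr]
    · rw [hτβ, Complex.conj_eq_self_of_sq_eq_ofReal (by linarith) hβr]

theorem norm_apply_div_apply_eq_one (htr : ∀ (ψ : L →+* ℂ) (y : L), (ψ y).im = 0)
    (hδ : δ ^ 2 = algebraMap L N d) (hβ : β ^ 2 = -algebraMap L N d)
    (hgen : Algebra.adjoin L {δ, β} = ⊤) {σ τ : Gal(N/L)} (hσδ : σ δ = δ) (hσβ : σ β = -β)
    (hτδ : τ δ = -δ) (hτβ : τ β = β) {x : N} (hx : x * σ x = 1) (φ : N →+* ℂ) :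
    ‖φ (x / τ x)‖ = 1 := by
  have ext_gen {f g : N →+* N} (hL : ∀ a, f (algebraMap L N a) = g (algebraMap L N a))
      (h₁ : f δ = g δ) (h₂ : f β = g β) (z : N) : f z = g z :=
    RingHom.congr_fun (RingHom.ext_of_adjoin_eq_top hgen (RingHom.ext hL)
      (by rintro _ (rfl | rfl) <;> assumption)) z
  have hcomm : ∀ z, σ (τ z) = τ (σ z) :=
    ext_gen (f := (σ : N →+* N).comp τ) (g := (τ : N →+* N).comp σ) (by simp)
      (by simp [hσδ, hτδ]) (by simp [hσβ, hτβ])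
  have hττ : ∀ z, τ (τ z) = z :=
    ext_gen (f := (τ : N →+* N).comp τ) (g := RingHom.id N) (by simp) (by simp [hτδ])
      (by simp [hτβ])
  have hx0 : x ≠ 0 := left_ne_zero_of_mul_eq_one hx
  have hτx0 : τ x ≠ 0 := by simpa using hx0
  rcases isConj_or_isConj_of_sq_eq htr hδ hβ hgen hσδ hσβ hτδ hτβ φ with h | h
  · refine h.norm_eq_one_of_mul_apply_eq_one ?_
    have hσx : σ x = x⁻¹ := eq_inv_of_mul_eq_one_right hx
    rw [map_div₀, hcomm, hσx, map_inv₀]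
    field_simp
  · refine h.norm_eq_one_of_mul_apply_eq_one ?_
    rw [map_div₀, hττ]
    field_simp

end Biquadratic

theorem NumberField.abs_norm_eq_prod_norm_apply {K : Type*} [Field K] [NumberField K] (x : K) :
    |(Algebra.norm ℚ x : ℝ)| = ∏ φ : K →ₐ[ℚ] ℂ, ‖φ x‖ := by
  rw [← norm_prod, ← Algebra.norm_eq_prod_embeddings, eq_ratCast, Complex.norm_ratCast]

theorem NumberField.RingOfIntegers.eq_zero_of_dvd_of_norm_lt {K : Type*} [Field K]
    [NumberField K] {n : ℤ} {z : 𝓞 K} (hn : (n : 𝓞 K) ∣ z)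
    (hz : ∀ φ : K →+* ℂ, ‖φ z‖ < |(n : ℝ)|) : z = 0 := by
  by_contra hz0
  obtain ⟨w, rfl⟩ := hn
  have hw0 : Algebra.norm ℤ w ≠ 0 := by
    rw [Ne, Algebra.norm_eq_zero_iff]; rintro rfl; simp at hz0
  have hnorm : Algebra.norm ℤ ((n : 𝓞 K) * w) = n ^ finrank ℚ K * Algebra.norm ℤ w := by
    rw [map_mul, ← eq_intCast (algebraMap ℤ (𝓞 K)), Algebra.norm_algebraMap,
      RingOfIntegers.rank]
  have hlow : |(n : ℝ)| ^ finrank ℚ K ≤ |(Algebra.norm ℤ ((n : 𝓞 K) * w) : ℝ)| := by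
    rw [hnorm, Int.cast_mul, abs_mul, Int.cast_pow, abs_pow]
    exact le_mul_of_one_le_right (by positivity) (by exact_mod_cast Int.one_le_abs hw0)
  have hup : |(Algebra.norm ℤ ((n : 𝓞 K) * w) : ℝ)| < |(n : ℝ)| ^ finrank ℚ K := by
    rw [← Rat.cast_intCast, Algebra.coe_norm_int, abs_norm_eq_prod_norm_apply,
      ← AlgHom.card ℚ K ℂ, ← Finset.card_univ, ← Finset.prod_const]
    have hne : (Finset.univ : Finset (K →ₐ[ℚ] ℂ)).Nonempty :=
      Finset.card_pos.1 (by rw [Finset.card_univ, AlgHom.card]; exact finrank_pos)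
    exact Finset.prod_lt_prod_of_nonempty
      (fun φ _ ↦ norm_pos_iff.2 ((map_ne_zero φ).2 (RingOfIntegers.coe_ne_zero_iff.2 hz0)))
      (fun φ _ ↦ hz φ.toRingHom) hne
  exact hlow.not_gt hup

theorem NumberField.Units.apply_eq_self_of_norm_div_apply_eq_one {K : Type*} [Field K]
    [NumberField K] {n : ℤ} (hn : 3 ≤ n) (τ : K ≃+* K) {x : (𝓞 K)ˣ} (hx : (n : 𝓞 K) ∣ x - 1)
    (h : ∀ φ : K →+* ℂ, ‖φ (x / τ x)‖ = 1) : τ x = x := by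
  set u := Units.map (RingOfIntegers.mapRingEquiv τ : 𝓞 K →* 𝓞 K) x
  have hu : (u : K) = τ x := rfl
  have hy : ((x * u⁻¹ : (𝓞 K)ˣ) : K) = x / τ x := by
    rw [Units.val_mul, map_mul, div_eq_mul_inv, ← hu, map_units_inv (algebraMap (𝓞 K) K)]
  have hu1 : (n : 𝓞 K) ∣ u - 1 := by
    have := map_dvd (RingOfIntegers.mapRingEquiv τ) hx
    rwa [map_sub, map_one, map_intCast] at this
  have hdvd : (n : 𝓞 K) ∣ ((x * u⁻¹ : (𝓞 K)ˣ) : 𝓞 K) - 1 := by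
    have : ((x * u⁻¹ : (𝓞 K)ˣ) : 𝓞 K) - 1 = ((x - 1) - (u - 1 : 𝓞 K)) * ↑u⁻¹ := by
      rw [sub_sub_sub_cancel_right, sub_mul, Units.mul_inv, Units.val_mul]
    rw [this]
    exact (dvd_sub hx hu1).mul_right _
  have hy1 := RingOfIntegers.eq_zero_of_dvd_of_norm_lt hdvd fun φ ↦ by
    calc ‖φ _‖ ≤ ‖φ (x / τ x)‖ + ‖(1 : ℂ)‖ := by
          rw [RingOfIntegers.coe_eq_algebraMap, map_sub, hy, map_one, map_sub, map_one]
          exact norm_sub_le _ _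
      _ = 2 := by rw [h, norm_one]; norm_num
      _ < |(n : ℝ)| := by
          rw [abs_of_nonneg (by positivity)]; exact_mod_cast (by omega : (2 : ℤ) < n)
  rw [sub_eq_zero, Units.val_eq_one, mul_inv_eq_one] at hy1
  rw [← hu, ← hy1]

theorem stmt_13_general (L : Type*) [Field L]
    (htr : ∀ (σ : L →+* ℂ) (y : L), (σ y).im = 0)
    (N : Type*) [Field N] [NumberField N] [Algebra L N]
    (hdeg : Module.finrank L N = 4)
    (d : L) (δ β : N)
    (hδ : δ ^ 2 = algebraMap L N d) (hβ : β ^ 2 = - algebraMap L N d)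
    (hgen : IntermediateField.adjoin L {δ, β} = (⊤ : IntermediateField L N))
    (F : IntermediateField L N) (hF : F = IntermediateField.adjoin L {δ})
    (M : IntermediateField L N) (hM : M = IntermediateField.adjoin L {β})
    (n : ℤ) (hn : 3 ≤ n)
    (x : (𝓞 N)ˣ)
    (hnorm : Algebra.norm F (algebraMap (𝓞 N) N (x : 𝓞 N)) = 1)
    (hcong : ((x : 𝓞 N) - 1) ∈ Ideal.span {(n : 𝓞 N)}) :
    algebraMap (𝓞 N) N (x : 𝓞 N) ∈ M := by
  subst hF hM
  have hβ' : β ^ 2 = algebraMap L N (-d) := by rw [hβ, map_neg]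
  have hgen' : L⟮β, δ⟯ = ⊤ := by rwa [Set.pair_comm]
  have := isQuadraticExtension_adjoin_of_finrank_eq_four hδ hβ' hgen hdeg
  have := isQuadraticExtension_adjoin_of_finrank_eq_four hβ' hδ hgen' hdeg
  obtain ⟨σ, hσ⟩ := Algebra.IsQuadraticExtension.exists_ne_one (K := L⟮δ⟯) (E := N)
  obtain ⟨τ, hτ⟩ := Algebra.IsQuadraticExtension.exists_ne_one (K := L⟮β⟯) (E := N)
  have hσβ : σ β = -β := Algebra.IsQuadraticExtension.apply_eq_neg hσ
    (c := algebraMap L _ (-d)) hβ' (adjoin_simple_adjoin_simple_eq_top hgen)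
  have hτδ : τ δ = -δ := Algebra.IsQuadraticExtension.apply_eq_neg hτ
    (c := algebraMap L _ d) hδ (adjoin_simple_adjoin_simple_eq_top hgen')
  have hσx : (x : N) * σ x = 1 := by
    rw [← Algebra.IsQuadraticExtension.algebraMap_norm_eq_mul hσ,
      ← RingOfIntegers.coe_eq_algebraMap, hnorm, map_one]
  have : FiniteDimensional L N := finite_of_finrank_pos (by omega)
  have halg : Algebra.adjoin L {δ, β} = ⊤ := by
    rw [← adjoin_toSubalgebra, hgen, top_toSubalgebra]
  have hσδ : σ δ = δ := σ.commutes ⟨δ, mem_adjoin_simple_self L δ⟩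
  have hτβ : τ β = β := τ.commutes ⟨β, mem_adjoin_simple_self L β⟩
  have hunimodular : ∀ φ : N →+* ℂ, ‖φ (x / τ x)‖ = 1 :=
    norm_apply_div_apply_eq_one (σ := σ.restrictScalars L) (τ := τ.restrictScalars L) htr hδ hβ
      halg hσδ hσβ hτδ hτβ hσx
  have hτx : τ x = x := NumberField.Units.apply_eq_self_of_norm_div_apply_eq_one hn τ
    (Ideal.mem_span_singleton.1 hcong) hunimodular
  obtain ⟨c, hc⟩ := mem_bot.1 (Algebra.IsQuadraticExtension.mem_bot_of_apply_eq_self hτ hτx)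
  exact hc ▸ c.2

/-- Lemma `min2`(3), reformulated.  With `L` totally real, `N/L` of degree
4 generated by `δ, β` with `δ² = d`, `β² = −d`, `F = L(δ)`, `M = L(β)`: if `n ≥ 3` and `x` is
a unit of `𝒪_N` with `N_{N/F}(x) = 1` and `x ≡ 1 (mod n𝒪_N)`, then `x ∈ M`. -/
theorem stmt_13 (L : Type*) [Field L] [NumberField L]
    (htr : ∀ (σ : L →+* ℂ) (y : L), (σ y).im = 0)
    (N : Type*) [Field N] [NumberField N] [Algebra L N]
    (hdeg : Module.finrank L N = 4)
    (d : L) (δ β : N)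
    (hδ : δ ^ 2 = algebraMap L N d) (hβ : β ^ 2 = - algebraMap L N d)
    (hgen : IntermediateField.adjoin L {δ, β} = (⊤ : IntermediateField L N))
    (F : IntermediateField L N) (hF : F = IntermediateField.adjoin L {δ})
    (M : IntermediateField L N) (hM : M = IntermediateField.adjoin L {β})
    (n : ℤ) (hn : 3 ≤ n)
    (x : (𝓞 N)ˣ)
    (hnorm : Algebra.norm F (algebraMap (𝓞 N) N (x : 𝓞 N)) = 1)
    (hcong : ((x : 𝓞 N) - 1) ∈ Ideal.span {(n : 𝓞 N)}) :
    algebraMap (𝓞 N) N (x : 𝓞 N) ∈ M :=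
  stmt_13_general L htr N hdeg d δ β hδ hβ hgen F hF M hM n hn x hnorm hcong
end

section
/- Let 𝐅 be a CM-field, i.e., a field algebraic over ℚ admitting no ring homomorphism into ℝ, equipped with a field automorphism σ of 𝐅 with σ ∘ σ = id whose fixed field 𝐋 = {x ∈ 𝐅 : σ(x) = x} is totally real. Let n ≥ 3 be a rational integer and let I be an ideal of 𝒪_𝐅 with I ⊆ n·𝒪_𝐅. Then for every unit x of 𝒪_𝐅 with x ≡ 1 (mod I) (i.e., x − 1 ∈ I), one has x² ∈ 𝐋, i.e., σ(x²) = x². -/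
/-!
Since `𝐋` is totally real and `𝐅` has no real embedding, every embedding `τ : 𝐅 → ℂ` satisfies
`conj ∘ τ = τ ∘ σ`. Hence `u = x / σ x` has `|τ u| = 1` for every `τ`. From `x ≡ 1 (mod n)` we get
`u - 1 = n w` with `w` an algebraic integer, so `|τ w| ≤ 2 / n < 1` for all `τ`; the constant
coefficient of the minimal polynomial of `w` is then an integer of absolute value `< 1`, forcing
`w = 0`. Thus `u = 1`, i.e. `σ x = x`.
-/

/-- The fixed subfield of a field automorphism. -/
def fixedSubfield {F : Type*} [Field F] (σ : F ≃+* F) : Subfield F where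
  carrier := {x | σ x = x}
  mul_mem' := by
    intro a b (ha : σ a = a) (hb : σ b = b)
    show σ (a * b) = a * b
    rw [map_mul, ha, hb]
  one_mem' := by show σ 1 = 1; exact map_one σ
  add_mem' := by
    intro a b (ha : σ a = a) (hb : σ b = b)
    show σ (a + b) = a + b
    rw [map_add, ha, hb]
  zero_mem' := by show σ 0 = 0; exact map_zero σ
  neg_mem' := by
    intro a (ha : σ a = a)
    show σ (-a) = -a
    rw [map_neg, ha]
  inv_mem' := by
    intro a (ha : σ a = a)
    show σ a⁻¹ = a⁻¹
    rw [map_inv₀, ha]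

open NumberField.ComplexEmbedding Polynomial

theorem AddMonoidHom.eq_or_eq_of_forall_eq_or_eq {G H : Type*} [AddZeroClass G]
    [AddCancelMonoid H] {f g h : G →+ H} (hfgh : ∀ z, f z = g z ∨ f z = h z) :
    f = g ∨ f = h := by
  by_contra! hne
  obtain ⟨a, ha⟩ := DFunLike.ne_iff.mp hne.1
  obtain ⟨b, hb⟩ := DFunLike.ne_iff.mp hne.2
  have hah : f a = h a := (hfgh a).resolve_left ha
  have hbg : f b = g b := (hfgh b).resolve_right hb
  rcases hfgh (a + b) with hab | hab
  · rw [map_add, map_add, hbg] at hab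
    exact ha (add_right_cancel hab)
  · rw [map_add, map_add, hah] at hab
    exact hb (add_left_cancel hab)

theorem exists_ringHom_apply_eq_of_mem_roots {K : Type*} [Field K] [CharZero K]
    [Algebra.IsAlgebraic ℚ K] {w : K} {r : ℂ}
    (hr : r ∈ ((minpoly ℚ w).map (algebraMap ℚ ℂ)).roots) : ∃ τ : K →+* ℂ, τ w = r := by
  have hr' : r ∈ (minpoly ℚ w).rootSet ℂ := by
    rwa [rootSet, aroots, Finset.mem_coe, Multiset.mem_toFinset]
  obtain ⟨ψ, hψ⟩ := (Algebra.IsAlgebraic.range_eval_eq_rootSet_minpoly (F := ℚ) ℂ w).symm ▸ hr'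
  exact ⟨ψ, hψ⟩

theorem eq_zero_of_isIntegral_of_forall_norm_lt_one {K : Type*} [Field K] [CharZero K]
    [Algebra.IsAlgebraic ℚ K] {w : K} (hw : IsIntegral ℤ w)
    (hlt : ∀ τ : K →+* ℂ, ‖τ w‖ < 1) : w = 0 := by
  by_contra hw0
  have hwℚ : IsIntegral ℚ w := hw.tower_top
  set p : ℂ[X] := (minpoly ℚ w).map (algebraMap ℚ ℂ)
  have hsplit : p.Splits := IsAlgClosed.splits _
  have hroots_ne : p.roots ≠ 0 := by
    rw [← Multiset.card_pos, ← hsplit.natDegree_eq_card_roots, natDegree_map]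
    exact minpoly.natDegree_pos hwℚ
  have hprod : ‖p.coeff 0‖ < 1 := by
    rw [hsplit.coeff_zero_eq_prod_roots_of_monic ((minpoly.monic hwℚ).map _), norm_mul,
      norm_pow, norm_neg, norm_one, one_pow, one_mul,
      show ‖p.roots.prod‖ = (p.roots.map (‖·‖)).prod from map_multiset_prod (normHom : ℂ →*₀ ℝ) _]
    have := Multiset.prod_map_lt_prod_map hroots_ne (fun r : ℂ => ‖r‖) (fun _ => 1) ?_ ?_
    · simpa using this
    · intro r hr
      obtain ⟨τ, rfl⟩ := exists_ringHom_apply_eq_of_mem_roots hr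
      simpa using hw0
    · intro r hr
      obtain ⟨τ, rfl⟩ := exists_ringHom_apply_eq_of_mem_roots hr
      exact hlt τ
  have hint : p.coeff 0 = ((minpoly ℤ w).coeff 0 : ℂ) := by
    simp [p, minpoly.isIntegrallyClosed_eq_field_fractions' ℚ hw, coeff_map]
  have hint_ne : (minpoly ℤ w).coeff 0 ≠ 0 := by
    intro h0
    apply minpoly.coeff_zero_ne_zero hwℚ hw0
    simp [minpoly.isIntegrallyClosed_eq_field_fractions' ℚ hw, coeff_map, h0]
  rw [hint, Complex.norm_intCast] at hprod
  exact absurd hprod (not_lt.mpr (by exact_mod_cast Int.one_le_abs hint_ne))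

theorem conjugate_eq_comp_of_isEmpty_ringHom_real {F : Type*} [Field F]
    (hcm : IsEmpty (F →+* ℝ)) (σ : F ≃+* F) (hσ : ∀ y : F, σ (σ y) = y)
    (htr : ∀ (τ : ↥(fixedSubfield σ) →+* ℂ) (y : ↥(fixedSubfield σ)), (τ y).im = 0)
    (τ : F →+* ℂ) : conjugate τ = τ.comp σ := by
  have hfix : ∀ y, σ y = y → conjugate τ y = τ y := fun y hy =>
    Complex.conj_eq_iff_im.mpr (htr (τ.comp (fixedSubfield σ).subtype) ⟨y, hy⟩)
  -- `conj (τ z)` is a root of `(t - τ z) * (t - τ (σ z))`, whose coefficients come from `𝐋`.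
  have hroot : ∀ z, conjugate τ z = τ z ∨ conjugate τ z = τ (σ z) := by
    intro z
    have hsum := hfix (z + σ z) (by rw [map_add, hσ, add_comm])
    have hmul := hfix (z * σ z) (by rw [map_mul, hσ, mul_comm])
    simp only [map_add, map_mul] at hsum hmul
    rw [← sub_eq_zero, ← sub_eq_zero (a := conjugate τ z), ← mul_eq_zero]
    linear_combination (conjugate τ z) * hsum - hmul
  rcases AddMonoidHom.eq_or_eq_of_forall_eq_or_eq (f := (conjugate τ : F →+ ℂ))
    (g := (τ : F →+ ℂ)) (h := ((τ.comp σ : F →+* ℂ) : F →+ ℂ)) hroot with hreal | hcomp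
  · exact hcm.elim (IsReal.embedding (isReal_iff.mpr (RingHom.coe_addMonoidHom_injective hreal)))
  · exact RingHom.coe_addMonoidHom_injective hcomp

theorem norm_apply_eq_one_of_mul_map_eq_one {F : Type*} [Field F] {σ : F →+* F} {τ : F →+* ℂ}
    (hτ : conjugate τ = τ.comp σ) {u : F} (hu : u * σ u = 1) : ‖τ u‖ = 1 := by
  have hsq : (‖τ u‖ : ℂ) ^ 2 = 1 := by
    rw [← Complex.mul_conj', ← conjugate_coe_eq, hτ, RingHom.comp_apply, ← map_mul, hu, map_one]
  exact (pow_eq_one_iff_of_nonneg (norm_nonneg _) two_ne_zero).mp (by exact_mod_cast hsq)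

theorem eq_one_of_forall_norm_eq_one_of_sub_one_eq_mul {K : Type*} [Field K] [CharZero K]
    [Algebra.IsAlgebraic ℚ K] {u w : K} (hw : IsIntegral ℤ w) {n : ℤ} (hn : 3 ≤ n)
    (huw : u - 1 = n * w) (hu : ∀ τ : K →+* ℂ, ‖τ u‖ = 1) : u = 1 := by
  suffices w = 0 by rwa [this, mul_zero, sub_eq_zero] at huw
  refine eq_zero_of_isIntegral_of_forall_norm_lt_one hw fun τ => ?_
  have hn' : (3 : ℝ) ≤ |(n : ℝ)| := by rw [abs_of_nonneg (by positivity)]; exact_mod_cast hn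
  have h : |(n : ℝ)| * ‖τ w‖ ≤ 2 := calc
    |(n : ℝ)| * ‖τ w‖ = ‖τ u - 1‖ := by
      rw [← map_one τ, ← map_sub, huw, map_mul, map_intCast, norm_mul, Complex.norm_intCast]
    _ ≤ ‖τ u‖ + ‖(1 : ℂ)‖ := norm_sub_le _ _
    _ = 2 := by rw [hu, norm_one]; norm_num
  nlinarith [norm_nonneg (τ w)]

/-- Lemma `Dirichlet`.  Let `𝐅` be a CM-field: a totally complex field
algebraic over `ℚ` with an involution `σ` whose fixed field `𝐋` is totally real.  Let
`n ≥ 3` and `I ⊆ n·𝒪_𝐅` an ideal of `𝒪_𝐅`.  Then every unit `x` of `𝒪_𝐅` with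
`x ≡ 1 (mod I)` satisfies `x² ∈ 𝐋`, i.e. `σ(x²) = x²`. -/
theorem stmt_17 (F : Type*) [Field F] [CharZero F] [Algebra.IsAlgebraic ℚ F]
    (hcm : IsEmpty (F →+* ℝ))
    (σ : F ≃+* F) (hσ : ∀ y : F, σ (σ y) = y)
    (htr : ∀ (τ : ↥(fixedSubfield σ) →+* ℂ) (y : ↥(fixedSubfield σ)), (τ y).im = 0)
    (n : ℤ) (hn : 3 ≤ n)
    (I : Ideal (integralClosure ℤ F))
    (hI : I ≤ Ideal.span {(n : integralClosure ℤ F)})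
    (x : (integralClosure ℤ F)ˣ)
    (hx : (x : integralClosure ℤ F) - 1 ∈ I) :
    σ (((x : integralClosure ℤ F) : F) ^ 2) = ((x : integralClosure ℤ F) : F) ^ 2 := by
  set X : F := ((x : integralClosure ℤ F) : F)
  set Y : F := (((x⁻¹ : (integralClosure ℤ F)ˣ) : integralClosure ℤ F) : F)
  have hXY : X * Y = 1 := by simp [X, Y, ← Subalgebra.coe_mul]
  obtain ⟨a, ha⟩ := Ideal.mem_span_singleton.mp (hI hx)
  have hXa : X - 1 = n * (a : F) := by simpa using congrArg Subtype.val ha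
  have hσXa : σ X - 1 = n * σ a := by simpa using congrArg σ hXa
  have hσXY : σ X * σ Y = 1 := by rw [← map_mul, hXY, map_one]
  set u := X * σ Y
  have huw : u - 1 = n * ((a - σ a) * σ Y) := by
    linear_combination σ Y * hXa - σ Y * hσXa + hσXY
  have hu : u * σ u = 1 := by
    rw [map_mul, hσ]; linear_combination (σ X * σ Y) * hXY + hσXY
  have hY : IsIntegral ℤ Y := (x⁻¹ : (integralClosure ℤ F)ˣ).val.2
  have hw : IsIntegral ℤ (((a : F) - σ a) * σ Y) :=
    (a.2.sub (a.2.map (σ : F →+* F).toIntAlgHom)).mul (hY.map (σ : F →+* F).toIntAlgHom)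
  have hu1 : u = 1 := eq_one_of_forall_norm_eq_one_of_sub_one_eq_mul hw hn huw fun τ =>
    norm_apply_eq_one_of_mul_map_eq_one
      (conjugate_eq_comp_of_isEmpty_ringHom_real hcm σ hσ htr τ) hu
  have hfix : σ X = X := by linear_combination -σ X * hu1 + X * hσXY
  rw [map_pow, hfix]
end

section
/- Let 𝐊 ⊆ 𝐋 ⊆ 𝐇 be algebraic (possibly infinite-degree) extensions of ℚ. (1) If the image of 𝒪_𝐊 in 𝒪_𝐋 has a diophantine definition over 𝒪_𝐋, and the image of 𝒪_𝐋 in 𝒪_𝐇 has a diophantine definition over 𝒪_𝐇, then the image of 𝒪_𝐊 in 𝒪_𝐇 has a diophantine definition over 𝒪_𝐇. (2) If 𝐇/𝐋 is a finite extension and the image of 𝒪_𝐊 in 𝒪_𝐇 has a diophantine definition over 𝒪_𝐇, then the image of 𝒪_𝐊 in 𝒪_𝐋 has a diophantine definition over 𝒪_𝐋. -/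
open MvPolynomial Module

lemma MvPolynomial.eval_bind₁ {R σ τ : Type*} [CommRing R] (v : τ → R)
    (g : σ → MvPolynomial τ R) (p : MvPolynomial σ R) :
    eval v (bind₁ g p) = eval (fun s => eval v (g s)) p := by
  induction p using MvPolynomial.induction_on <;> simp_all

lemma MvPolynomial.exists_eval_eq_linearMap_eval {L H ι : Type*} [CommRing L] [CommRing H]
    [Algebra L H] (ℓ : H →ₗ[L] L) (Q : MvPolynomial ι H) :
    ∃ P : MvPolynomial ι L, ∀ v : ι → L, ℓ (eval (algebraMap L H ∘ v) Q) = eval v P := by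
  refine ⟨∑ s ∈ Q.support, monomial s (ℓ (Q.coeff s)), fun v => ?_⟩
  rw [eval_eq, map_sum, map_sum]
  refine Finset.sum_congr rfl fun s _ => ?_
  simp only [eval_monomial, Finsupp.prod, Function.comp_apply, ← map_pow, ← map_prod]
  rw [mul_comm, ← Algebra.smul_def, map_smul, smul_eq_mul, mul_comm]

lemma MvPolynomial.exists_map_eq_smul {A L ι : Type*} [CommRing A] [Field L] [Algebra A L]
    [IsFractionRing A L] (P : MvPolynomial ι L) :
    ∃ d ∈ nonZeroDivisors A, ∃ P' : MvPolynomial ι A,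
      map (algebraMap A L) P' = algebraMap A L d • P := by
  obtain ⟨⟨d, hd⟩, hdP⟩ :=
    IsLocalization.exist_integer_multiples_of_finset (nonZeroDivisors A) P.coeffs
  refine ⟨d, hd, ?_⟩
  rw [← Set.mem_range, mem_range_map_iff_coeffs_subset]
  intro c hc
  obtain ⟨n, hn, rfl⟩ := mem_coeffs_iff.1 hc
  have hn' : coeff n P ∈ P.coeffs := coeff_mem_coeffs _ fun h => by simp_all
  simpa [Algebra.smul_def, IsLocalization.IsInteger] using hdP _ hn'

def IsDiophantine (R : Type*) [CommRing R] {ι : Type} (S : Set (ι → R)) : Prop :=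
  ∃ (ν κ : Type) (_ : Finite ν) (_ : Finite κ) (f : κ → MvPolynomial (ι ⊕ ν) R),
    ∀ x, x ∈ S ↔ ∃ a : ν → R, ∀ k, eval (Sum.elim x a) (f k) = 0

namespace IsDiophantine

variable {R : Type*} [CommRing R] {ι : Type}

lemma zeroLocus (p : MvPolynomial ι R) : IsDiophantine R {x | eval x p = 0} :=
  ⟨Empty, Unit, inferInstance, inferInstance, fun _ => rename Sum.inl p, fun x => by
    simp [eval_rename, Function.comp_def]⟩

lemma iInter {J : Type} [Finite J] {S : J → Set (ι → R)} (h : ∀ j, IsDiophantine R (S j)) :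
    IsDiophantine R (⋂ j, S j) := by
  choose ν κ _ _ f hf using h
  refine ⟨Σ j, ν j, Σ j, κ j, inferInstance, inferInstance,
    fun c => rename (Sum.map id (Sigma.mk (β := ν) c.1)) (f c.1 c.2), fun x => ?_⟩
  simp only [Set.mem_iInter, hf, eval_rename, Sigma.forall, Sum.elim_comp_map, Function.comp_id]
  constructor
  · intro h
    choose a ha using h
    exact ⟨fun c => a c.1 c.2, ha⟩
  · rintro ⟨a, ha⟩ j
    exact ⟨fun v => a ⟨j, v⟩, ha j⟩

lemma inter {S T : Set (ι → R)} (hS : IsDiophantine R S) (hT : IsDiophantine R T) :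
    IsDiophantine R (S ∩ T) := by
  rw [Set.inter_eq_iInter]
  exact iInter (Bool.forall_bool.2 ⟨hT, hS⟩)

lemma exists_sumElim {μ : Type} [Finite μ] {S : Set (ι ⊕ μ → R)} (h : IsDiophantine R S) :
    IsDiophantine R {x | ∃ y, Sum.elim x y ∈ S} := by
  obtain ⟨ν, κ, _, _, f, hf⟩ := h
  refine ⟨μ ⊕ ν, κ, inferInstance, inferInstance,
    fun k => rename (Equiv.sumAssoc ι μ ν) (f k), fun x => ?_⟩
  simp only [Set.mem_ofPred_eq, hf, eval_rename]
  have reassoc (b : μ ⊕ ν → R) : Sum.elim x b ∘ Equiv.sumAssoc ι μ ν =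
      Sum.elim (Sum.elim x (b ∘ Sum.inl)) (b ∘ Sum.inr) := by
    funext c; rcases c with (_ | _) | _ <;> rfl
  simp only [reassoc]
  constructor
  · rintro ⟨y, a, h⟩
    exact ⟨Sum.elim y a, h⟩
  · rintro ⟨b, h⟩
    exact ⟨_, _, h⟩

lemma preimage_eval {ι' : Type} {S : Set (ι → R)} (h : IsDiophantine R S)
    (p : ι → MvPolynomial ι' R) : IsDiophantine R {x | (fun i => eval x (p i)) ∈ S} := by
  obtain ⟨ν, κ, _, _, f, hf⟩ := h
  refine ⟨ν, κ, inferInstance, inferInstance,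
    fun k => bind₁ (Sum.elim (fun i => rename Sum.inl (p i)) (fun v => X (Sum.inr v))) (f k),
    fun x => ?_⟩
  simp only [Set.mem_ofPred_eq, hf, eval_bind₁]
  have subst (a : ν → R) : (fun s => eval (Sum.elim x a)
      (Sum.elim (fun i => rename Sum.inl (p i)) (fun v => X (Sum.inr v)) s)) =
      Sum.elim (fun i => eval x (p i)) a := by
    funext c; rcases c with i | v <;> simp [eval_rename, Function.comp_def]
  simp only [subst]

end IsDiophantine

lemma isDiophantineOver_iff {R : Type*} [CommRing R] {E : Set R} :
    IsDiophantineOver R E ↔ IsDiophantine R {x : Unit → R | x () ∈ E} := by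
  constructor
  · rintro ⟨n, k, f, hf⟩
    refine ⟨Fin n, Fin k, inferInstance, inferInstance,
      fun i => rename (Fin.cons (Sum.inl ()) Sum.inr) (f i), fun x => ?_⟩
    have cons_eq (a : Fin n → R) :
        Sum.elim x a ∘ Fin.cons (Sum.inl ()) Sum.inr = Fin.cons (x ()) a := by
      funext j; cases j using Fin.cases <;> rfl
    simp only [Set.mem_ofPred_eq, hf, eval_rename, cons_eq]
  · rintro ⟨ν, κ, _, _, f, hf⟩
    obtain ⟨n, ⟨eν⟩⟩ := Finite.exists_equiv_fin ν
    obtain ⟨k, ⟨eκ⟩⟩ := Finite.exists_equiv_fin κ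
    refine ⟨n, k, fun i => rename (Sum.elim (fun _ => 0) (Fin.succ ∘ eν)) (f (eκ.symm i)),
      fun τ => ?_⟩
    have elim_eq (a : Fin n → R) :
        Fin.cons τ a ∘ Sum.elim (fun _ : Unit => 0) (Fin.succ ∘ eν) =
          Sum.elim (fun _ => τ) (a ∘ eν) := by
      funext c; rcases c with _ | _ <;> rfl
    simp only [eval_rename, elim_eq]
    refine (hf fun _ => τ).trans
      ⟨fun ⟨b, hb⟩ => ⟨b ∘ eν.symm, fun i => ?_⟩, fun ⟨a, ha⟩ => ⟨a ∘ eν, fun c => ?_⟩⟩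
    · simpa [Function.comp_def] using hb (eκ.symm i)
    · simpa using ha (eκ c)

section Image

variable {R S : Type*} [CommRing R] [CommRing S] {φ : R →+* S}

lemma IsDiophantine.image_comp {ι : Type} [Finite ι] {E : Set (ι → R)}
    (hE : IsDiophantine R E) (hφ : Function.Injective φ)
    (hrange : IsDiophantineOver S (Set.range φ)) : IsDiophantine S ((φ ∘ ·) '' E) := by
  obtain ⟨ν, κ, _, _, f, hf⟩ := hE
  have hcoord (c : ι ⊕ ν) : IsDiophantine S {y | y c ∈ Set.range φ} := by
    simpa using (isDiophantineOver_iff.mp hrange).preimage_eval (fun _ => X c)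
  convert ((IsDiophantine.iInter hcoord).inter (IsDiophantine.iInter
    fun k => IsDiophantine.zeroLocus (map φ (f k)))).exists_sumElim using 1
  ext x
  simp only [Set.mem_image, Set.mem_ofPred_eq, Set.mem_inter_iff, Set.mem_iInter, hf]
  constructor
  · rintro ⟨x₀, ⟨a, ha⟩, rfl⟩
    refine ⟨φ ∘ a, fun c => ?_, fun k => ?_⟩
    · rcases c with i | v <;> simp
    · rw [← Sum.comp_elim, ← map_eval, ha, map_zero]
  · rintro ⟨y, hy, hzero⟩
    choose pre hpre using hy
    have hpre' : φ ∘ pre = Sum.elim x y := funext hpre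
    refine ⟨pre ∘ Sum.inl, ⟨pre ∘ Sum.inr, fun k => hφ ?_⟩, ?_⟩
    · rw [Sum.elim_comp_inl_inr, map_eval, hpre', hzero, map_zero]
    · rw [← Function.comp_assoc, hpre', Sum.elim_comp_inl]

lemma IsDiophantineOver.image {E : Set R} (hE : IsDiophantineOver R E)
    (hφ : Function.Injective φ) (hrange : IsDiophantineOver S (Set.range φ)) :
    IsDiophantineOver S (φ '' E) := by
  rw [isDiophantineOver_iff] at hE ⊢
  convert (hE.image_comp hφ hrange) using 1
  ext x
  constructor
  · rintro ⟨y, hy, hxy⟩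
    exact ⟨fun _ => y, hy, funext fun _ => hxy⟩
  · rintro ⟨y, hy, rfl⟩
    exact ⟨y (), hy, rfl⟩

end Image

section Preimage

variable {A C B : Type*} [CommRing A] [CommRing C] [CommRing B] {g : A →+* C} {j : C →+* B}

lemma IsDiophantineOver.preimage_of_parametrization (hj : Function.Injective j)
    (hzero : ∀ {ι : Type} (Q : MvPolynomial ι B),
      IsDiophantine A {w | eval (j.comp g ∘ w) Q = 0})
    {μ : Type} [Finite μ] (ψ Φ : MvPolynomial μ B)
    (hparam : ∀ y, y ∈ Set.range j ↔
      ∃ w : μ → A, eval (j.comp g ∘ w) Φ = 0 ∧ eval (j.comp g ∘ w) ψ = y)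
    {E : Set C} (hE : IsDiophantineOver C E) : IsDiophantineOver A (g ⁻¹' E) := by
  rw [isDiophantineOver_iff] at hE ⊢
  obtain ⟨ν, κ, _, _, f, hf⟩ := hE
  -- A solution `a : ν → C` is encoded by `w : ν × μ → A` with `j (a v) = ψ (w (v, ·))`.
  let block (v : ν) : MvPolynomial μ B → MvPolynomial (Unit ⊕ ν × μ) B :=
    rename fun m => Sum.inr (v, m)
  let F (k : κ) : MvPolynomial (Unit ⊕ ν × μ) B :=
    bind₁ (Sum.elim (fun _ => X (Sum.inl ())) fun v => block v ψ) (map j (f k))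
  convert ((IsDiophantine.iInter fun v => hzero (block v Φ)).inter
    (IsDiophantine.iInter fun k => hzero (F k))).exists_sumElim using 1
  ext x
  have eval_block (w : ν × μ → A) (v : ν) (P : MvPolynomial μ B) :
      eval (j.comp g ∘ Sum.elim x w) (block v P) = eval (j.comp g ∘ fun m => w (v, m)) P := by
    simp only [block, eval_rename]
    rfl
  have eval_F (w : ν × μ → A) (a : ν → C)
      (ha : ∀ v, eval (j.comp g ∘ fun m => w (v, m)) ψ = j (a v)) (k : κ) :
      eval (j.comp g ∘ Sum.elim x w) (F k) = j (eval (Sum.elim (fun _ => g (x ())) a) (f k)) := by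
    rw [eval_bind₁, map_eval]
    congr 2
    funext c
    rcases c with _ | v
    · simp
    · exact (eval_block w v ψ).trans (ha v)
  simp only [Set.mem_preimage, Set.mem_ofPred_eq, Set.mem_inter_iff, Set.mem_iInter, eval_block]
  constructor
  · intro hx
    obtain ⟨a, ha⟩ := (hf fun _ => g (x ())).1 hx
    choose W hW using fun v => (hparam (j (a v))).1 ⟨a v, rfl⟩
    refine ⟨fun p => W p.1 p.2, fun v => (hW v).1, fun k => ?_⟩
    rw [eval_F (fun p => W p.1 p.2) a (fun v => (hW v).2) k, ha k, map_zero]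
  · rintro ⟨w, hΦ, hF⟩
    choose a ha using fun v =>
      (hparam (eval (j.comp g ∘ fun m => w (v, m)) ψ)).2 ⟨fun m => w (v, m), hΦ v, rfl⟩
    refine (hf fun _ => g (x ())).2 ⟨a, fun k => hj ?_⟩
    rw [← eval_F w a (fun v => (ha v).symm), hF, map_zero]

end Preimage

lemma IsDiophantine.zeroLocus_algebraMap_of_isFractionRing {A L : Type*} [CommRing A]
    [Nontrivial A] [Field L] [Algebra A L] [IsFractionRing A L] {ι : Type}
    (P : MvPolynomial ι L) : IsDiophantine A {w | eval (algebraMap A L ∘ w) P = 0} := by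
  obtain ⟨d, hd, P', hP'⟩ := MvPolynomial.exists_map_eq_smul (A := A) P
  convert IsDiophantine.zeroLocus P' using 1
  ext w
  have hmap : algebraMap A L (eval w P') = algebraMap A L d * eval (algebraMap A L ∘ w) P := by
    rw [map_eval, hP', smul_eval]
  simp only [Set.mem_ofPred_eq, ← (IsFractionRing.injective A L).eq_iff (b := 0), hmap,
    map_zero, mul_eq_zero, IsFractionRing.to_map_ne_zero_of_mem_nonZeroDivisors hd, false_or]

lemma IsDiophantine.zeroLocus_of_basis {A L H : Type*} [CommRing A] [CommRing L] [CommRing H]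
    [Algebra L H] {κ : Type} [Finite κ] (b : Basis κ L H) {h : A →+* L} {ι : Type}
    (hzero : ∀ P : MvPolynomial ι L, IsDiophantine A {w | eval (h ∘ w) P = 0})
    (Q : MvPolynomial ι H) :
    IsDiophantine A {w | eval ((algebraMap L H).comp h ∘ w) Q = 0} := by
  choose P hP using fun r => MvPolynomial.exists_eval_eq_linearMap_eval (b.coord r) Q
  convert IsDiophantine.iInter fun r => hzero (P r) using 1
  ext w
  simp only [Set.mem_ofPred_eq, Set.mem_iInter, ← hP, RingHom.coe_comp, Function.comp_assoc]
  exact b.forall_coord_eq_zero_iff.symm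

lemma isIntegral_of_pow_add_sum_eq_zero {R S : Type*} [CommRing R] [Ring S] [Algebra R S]
    {m : ℕ} {y : S} (u : Fin m → R)
    (h : y ^ m + ∑ i, algebraMap R S (u i) * y ^ (i : ℕ) = 0) : IsIntegral R y := by
  refine ⟨Polynomial.X ^ m + ∑ i, Polynomial.C (u i) * Polynomial.X ^ (i : ℕ),
    Polynomial.monic_X_pow_add (Polynomial.degree_sum_fin_lt u), ?_⟩
  simpa [Polynomial.eval₂_finsetSum] using h

section IntegrallyClosed

variable {R L H : Type*} [CommRing R] [IsDomain R] [IsIntegrallyClosed R] [Field L] [Algebra R L]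
  [IsFractionRing R L] [Field H] [Algebra L H] [Algebra R H] [IsScalarTower R L H]
  [FiniteDimensional L H]

lemma IsIntegral.exists_pow_finrank_add_sum_eq_zero {y : H} (hy : IsIntegral R y) :
    ∃ u : Fin (finrank L H) → R,
      y ^ finrank L H + ∑ i, algebraMap R H (u i) * y ^ (i : ℕ) = 0 := by
  have hd : (minpoly R y).natDegree ≤ finrank L H := by
    rw [← Polynomial.natDegree_map_eq_of_injective (IsFractionRing.injective R L),
      ← minpoly.isIntegrallyClosed_eq_field_fractions' L hy]
    exact minpoly.natDegree_le y
  set p := minpoly R y * Polynomial.X ^ (finrank L H - (minpoly R y).natDegree)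
  have hp : p.Monic := (minpoly.monic hy).mul (Polynomial.monic_X_pow _)
  have hpdeg : p.natDegree = finrank L H := by
    rw [(minpoly.monic hy).natDegree_mul (Polynomial.monic_X_pow _), Polynomial.natDegree_X_pow]
    omega
  have hpy : Polynomial.aeval y p = 0 := by simp [p]
  rw [hp.as_sum, hpdeg] at hpy
  refine ⟨fun i => p.coeff i, ?_⟩
  simpa [Fin.sum_univ_eq_sum_range (fun i => algebraMap R H (p.coeff i) * y ^ i)] using hpy

lemma exists_isIntegral_iff_exists_eval [Algebra.IsSeparable L H] :
    ∃ (μ : Type) (_ : Finite μ) (ψ Φ : MvPolynomial μ H), ∀ y : H, IsIntegral R y ↔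
      ∃ w : μ → R, eval (algebraMap R H ∘ w) Φ = 0 ∧ eval (algebraMap R H ∘ w) ψ = y := by
  classical
  obtain ⟨s, b, hb⟩ := FiniteDimensional.exists_is_basis_integral R L H
  obtain ⟨n, ⟨e⟩⟩ := Finite.exists_equiv_fin s
  set b₀ := b.reindex e
  set b' := (Algebra.traceForm L H).dualBasis (traceForm_nondegenerate L H) b₀
  set m := finrank L H
  let ψ : MvPolynomial (Fin n ⊕ Fin m) H := ∑ i, C (b' i) * X (Sum.inl i)
  refine ⟨Fin n ⊕ Fin m, inferInstance, ψ, ψ ^ m + ∑ i : Fin m, X (Sum.inr i) * ψ ^ (i : ℕ),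
    fun y => ?_⟩
  have eval_ψ (w : Fin n ⊕ Fin m → R) :
      eval (algebraMap R H ∘ w) ψ = ∑ i, w (Sum.inl i) • b' i := by
    simp [ψ, Algebra.smul_def, mul_comm]
  simp only [eval_ψ, map_add, map_pow, map_sum, map_mul, eval_X, Function.comp_apply]
  constructor
  · intro hy
    obtain ⟨z, rfl⟩ := (Submodule.mem_span_range_iff_exists_fun R).1
      (integralClosure_le_span_dualBasis b₀ (fun i => by simpa [b₀] using hb _) hy)
    obtain ⟨u, hu⟩ := hy.exists_pow_finrank_add_sum_eq_zero (L := L)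
    exact ⟨Sum.elim z u, hu, rfl⟩
  · rintro ⟨w, hw, rfl⟩
    exact isIntegral_of_pow_add_sum_eq_zero _ hw

end IntegrallyClosed

section IntegralClosure

def integralClosureMap (K L : Type*) [Field K] [Field L] [Algebra K L] :
    integralClosure ℤ K →+* integralClosure ℤ L :=
  (IsScalarTower.toAlgHom ℤ K L).mapIntegralClosure

variable {K L H : Type*} [Field K] [Field L] [Field H] [Algebra K L]

lemma integralClosureMap_injective : Function.Injective (integralClosureMap K L) :=
  fun _ _ h => Subtype.ext ((algebraMap K L).injective (congrArg Subtype.val h))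

lemma range_integralClosureMap :
    Set.range (integralClosureMap K L) =
      {x : integralClosure ℤ L | ∃ y : integralClosure ℤ K, algebraMap K L (y : K) = (x : L)} := by
  ext x
  exact ⟨fun ⟨y, hy⟩ => ⟨y, congrArg Subtype.val hy⟩, fun ⟨y, hy⟩ => ⟨y, Subtype.ext hy⟩⟩

lemma integralClosureMap_comp [Algebra L H] [Algebra K H] [IsScalarTower K L H] :
    (integralClosureMap L H).comp (integralClosureMap K L) = integralClosureMap K H :=
  RingHom.ext fun x => Subtype.ext (IsScalarTower.algebraMap_apply K L H x).symm

lemma isFractionRing_integralClosure_int [CharZero L] [Algebra.IsAlgebraic ℚ L] :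
    IsFractionRing (integralClosure ℤ L) L :=
  have : Algebra.IsAlgebraic ℤ L :=
    ⟨fun x => (IsFractionRing.isAlgebraic_iff ℤ ℚ L).mpr (Algebra.IsAlgebraic.isAlgebraic x)⟩
  integralClosure.isFractionRing_of_algebraic fun _ => (Int.cast_eq_zero).mp

lemma IsDiophantineOver.preimage_integralClosureMap [CharZero L] [Algebra.IsAlgebraic ℚ L]
    [Algebra L H] [FiniteDimensional L H] {E : Set (integralClosure ℤ H)}
    (hE : IsDiophantineOver (integralClosure ℤ H) E) :
    IsDiophantineOver (integralClosure ℤ L) (integralClosureMap L H ⁻¹' E) := by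
  have := isFractionRing_integralClosure_int (L := L)
  have : IsIntegrallyClosed (integralClosure ℤ L) :=
    (isIntegrallyClosed_iff_isIntegrallyClosedIn L).mpr (.of_isIntegralClosure ℤ)
  have hcomp : (algebraMap (integralClosure ℤ H) H).comp (integralClosureMap L H) =
      algebraMap (integralClosure ℤ L) H := RingHom.ext fun _ => rfl
  obtain ⟨μ, _, ψ, Φ, hparam⟩ := exists_isIntegral_iff_exists_eval
    (R := integralClosure ℤ L) (L := L) (H := H)
  refine hE.preimage_of_parametrization (IsIntegralClosure.algebraMap_injective _ ℤ H)
    (fun Q => ?_) ψ Φ fun y => ?_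
  · rw [hcomp, IsScalarTower.algebraMap_eq (integralClosure ℤ L) L H]
    exact IsDiophantine.zeroLocus_of_basis (finBasis L H)
      IsDiophantine.zeroLocus_algebraMap_of_isFractionRing Q
  · rw [hcomp, ← hparam, Set.mem_range,
      ← IsIntegralClosure.isIntegral_iff (A := integralClosure ℤ H) (R := ℤ)]
    exact ⟨IsIntegral.tower_top, isIntegral_trans y⟩

end IntegralClosure

theorem stmt_19_general (K L H : Type*) [Field K] [Field L] [Field H]
    [CharZero L]
    [Algebra.IsAlgebraic ℚ L]
    [Algebra K L] [Algebra L H] [Algebra K H] [IsScalarTower K L H] :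
    ((IsDiophantineOver (integralClosure ℤ L)
        {x : integralClosure ℤ L | ∃ y : integralClosure ℤ K,
          algebraMap K L (y : K) = (x : L)} →
      IsDiophantineOver (integralClosure ℤ H)
        {x : integralClosure ℤ H | ∃ y : integralClosure ℤ L,
          algebraMap L H (y : L) = (x : H)} →
      IsDiophantineOver (integralClosure ℤ H)
        {x : integralClosure ℤ H | ∃ y : integralClosure ℤ K,
          algebraMap K H (y : K) = (x : H)})
    ∧ (FiniteDimensional L H →
      IsDiophantineOver (integralClosure ℤ H)
        {x : integralClosure ℤ H | ∃ y : integralClosure ℤ K,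
          algebraMap K H (y : K) = (x : H)} →
      IsDiophantineOver (integralClosure ℤ L)
        {x : integralClosure ℤ L | ∃ y : integralClosure ℤ K,
          algebraMap K L (y : K) = (x : L)})) := by
  have image_eq : Set.range (integralClosureMap K H) =
      integralClosureMap L H '' Set.range (integralClosureMap K L) := by
    rw [← Set.range_comp, ← RingHom.coe_comp, integralClosureMap_comp]
  simp only [← range_integralClosureMap]
  refine ⟨fun hKL hLH => ?_, fun _ hKH => ?_⟩
  · rw [image_eq]
    exact hKL.image integralClosureMap_injective hLH
  · rw [← Set.preimage_image_eq (Set.range (integralClosureMap K L))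
      (integralClosureMap_injective (K := L) (L := H)), ← image_eq]
    exact hKH.preimage_integralClosureMap

/-- Transitivity and descent for diophantine definitions.  Let
`𝐊 ⊆ 𝐋 ⊆ 𝐇` be algebraic (possibly infinite) extensions of `ℚ`.
(1) If the image of `𝒪_𝐊` in `𝒪_𝐋` is diophantine over `𝒪_𝐋` and the image of `𝒪_𝐋` in
`𝒪_𝐇` is diophantine over `𝒪_𝐇`, then the image of `𝒪_𝐊` in `𝒪_𝐇` is diophantine over
`𝒪_𝐇`.  (2) If `𝐇/𝐋` is finite and the image of `𝒪_𝐊` in `𝒪_𝐇` is diophantine over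
`𝒪_𝐇`, then the image of `𝒪_𝐊` in `𝒪_𝐋` is diophantine over `𝒪_𝐋`. -/
theorem stmt_19 (K L H : Type*) [Field K] [Field L] [Field H]
    [CharZero K] [CharZero L] [CharZero H]
    [Algebra.IsAlgebraic ℚ K] [Algebra.IsAlgebraic ℚ L] [Algebra.IsAlgebraic ℚ H]
    [Algebra K L] [Algebra L H] [Algebra K H] [IsScalarTower K L H] :
    ((IsDiophantineOver (integralClosure ℤ L)
        {x : integralClosure ℤ L | ∃ y : integralClosure ℤ K,
          algebraMap K L (y : K) = (x : L)} →
      IsDiophantineOver (integralClosure ℤ H)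
        {x : integralClosure ℤ H | ∃ y : integralClosure ℤ L,
          algebraMap L H (y : L) = (x : H)} →
      IsDiophantineOver (integralClosure ℤ H)
        {x : integralClosure ℤ H | ∃ y : integralClosure ℤ K,
          algebraMap K H (y : K) = (x : H)})
    ∧ (FiniteDimensional L H →
      IsDiophantineOver (integralClosure ℤ H)
        {x : integralClosure ℤ H | ∃ y : integralClosure ℤ K,
          algebraMap K H (y : K) = (x : H)} →
      IsDiophantineOver (integralClosure ℤ L)
        {x : integralClosure ℤ L | ∃ y : integralClosure ℤ K,
          algebraMap K L (y : K) = (x : L)})) :=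
  stmt_19_general K L H
end
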